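/- arXiv:math/0603548 — 2 statements merged into one kernel-verified Lean document; each statement's English description precedes it below -/
import Mathlib

section
/- The group G_BF is finitely presented: there exist natural numbers m and k and relators r_1, …, r_k in the free group on m generators such that the presented group on m generators with relators r_1, …, r_k is isomorphic to G_BF. -/
/-- Relator corresponding to the equation `u = v`. -/
def grel {α : Type*} (u v : FreeGroup α) : FreeGroup α := u * v⁻¹

/-- Generators of the pure braided Thompson group `BF`.  `a i k` denotes
`α_{i+1, i+k+2}` and `b i k` denotes `β_{i+1, i+k+2}` (so that exactly the
generators `α_{ij}, β_{ij}` with `1 ≤ i < j` occur). -/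
inductive BFGen : Type
  | x : ℕ → BFGen
  | a : ℕ → ℕ → BFGen
  | b : ℕ → ℕ → BFGen

namespace BFGen

/-- The free-group letter `x_i`. -/
def X (i : ℕ) : FreeGroup BFGen := FreeGroup.of (BFGen.x i)

/-- The free-group letter `α_{ij}` (meaningful for `1 ≤ i < j`). -/
def A (i j : ℕ) : FreeGroup BFGen := FreeGroup.of (BFGen.a (i - 1) (j - i - 1))

/-- The free-group letter `β_{ij}` (meaningful for `1 ≤ i < j`). -/
def B (i j : ℕ) : FreeGroup BFGen := FreeGroup.of (BFGen.b (i - 1) (j - i - 1))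

/-- The defining relations of `BF`. -/
def bfRels : Set (FreeGroup BFGen) :=
  { g |
    -- (A)
    (∃ i j, i < j ∧ g = grel (X j * X i) (X i * X (j + 1))) ∨
    -- (B1)
    (∃ r s i j, 1 ≤ r ∧ r < s ∧ ((s < i ∧ i < j) ∨ (1 ≤ i ∧ i < r ∧ s < j)) ∧
      g = grel ((A r s)⁻¹ * A i j * A r s) (A i j)) ∨
    -- (B2) (s = i)
    (∃ r s j, 1 ≤ r ∧ r < s ∧ s < j ∧
      g = grel ((A r s)⁻¹ * A s j * A r s) (A r j * A s j * (A r j)⁻¹)) ∨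
    -- (B3) (r = i)
    (∃ i s j, 1 ≤ i ∧ i < s ∧ s < j ∧
      g = grel ((A i s)⁻¹ * A i j * A i s)
        ((A i j * A s j) * A i j * (A i j * A s j)⁻¹)) ∨
    -- (B4)
    (∃ r i s j, 1 ≤ r ∧ r < i ∧ i < s ∧ s < j ∧
      g = grel ((A r s)⁻¹ * A i j * A r s)
        ((A r j * A s j * (A r j)⁻¹ * (A s j)⁻¹) * A i j *
          (A r j * A s j * (A r j)⁻¹ * (A s j)⁻¹)⁻¹)) ∨
    -- (B5)
    (∃ r s i j, 1 ≤ r ∧ r < s ∧ ((s < i ∧ i < j) ∨ (1 ≤ i ∧ i < r ∧ s < j)) ∧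
      g = grel ((A r s)⁻¹ * B i j * A r s) (B i j)) ∨
    -- (B6) (s = i)
    (∃ r s j, 1 ≤ r ∧ r < s ∧ s < j ∧
      g = grel ((A r s)⁻¹ * B s j * A r s) (B r j * B s j * (B r j)⁻¹)) ∨
    -- (B7) (r = i)
    (∃ i s j, 1 ≤ i ∧ i < s ∧ s < j ∧
      g = grel ((A i s)⁻¹ * B i j * A i s)
        ((B i j * B s j) * B i j * (B i j * B s j)⁻¹)) ∨
    -- (B8)
    (∃ r i s j, 1 ≤ r ∧ r < i ∧ i < s ∧ s < j ∧
      g = grel ((A r s)⁻¹ * B i j * A r s)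
        ((B r j * B s j * (B r j)⁻¹ * (B s j)⁻¹) * B i j *
          (B r j * B s j * (B r j)⁻¹ * (B s j)⁻¹)⁻¹)) ∨
    -- (C)
    (∃ i j, 1 ≤ i ∧ i < j ∧ g = grel (B i j) (B i (j + 1) * A i j)) ∨
    -- (D1) (k < i - 1)
    (∃ i j k, 1 ≤ i ∧ i < j ∧ k + 1 < i ∧
      g = grel (A i j * X k) (X k * A (i + 1) (j + 1))) ∨
    -- (D2) (k = i - 1)
    (∃ i j, 1 ≤ i ∧ i < j ∧
      g = grel (A i j * X (i - 1)) (X (i - 1) * A (i + 1) (j + 1) * A i (j + 1))) ∨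
    -- (D3) (i - 1 < k < j - 1)
    (∃ i j k, 1 ≤ i ∧ i < j ∧ i ≤ k ∧ k + 1 < j ∧
      g = grel (A i j * X k) (X k * A i (j + 1))) ∨
    -- (D4) (k = j - 1)
    (∃ i j, 1 ≤ i ∧ i < j ∧
      g = grel (A i j * X (j - 1)) (X (j - 1) * A i (j + 1) * A i j)) ∨
    -- (D5) (k > j - 1)
    (∃ i j k, 1 ≤ i ∧ i < j ∧ j ≤ k ∧ g = grel (A i j * X k) (X k * A i j)) ∨
    -- (D6) (k < i - 1)
    (∃ i j k, 1 ≤ i ∧ i < j ∧ k + 1 < i ∧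
      g = grel (B i j * X k) (X k * B (i + 1) (j + 1))) ∨
    -- (D7) (k = i - 1)
    (∃ i j, 1 ≤ i ∧ i < j ∧
      g = grel (B i j * X (i - 1)) (X (i - 1) * B (i + 1) (j + 1) * B i (j + 1))) ∨
    -- (D8) (i - 1 < k < j - 1)
    (∃ i j k, 1 ≤ i ∧ i < j ∧ i ≤ k ∧ k + 1 < j ∧
      g = grel (B i j * X k) (X k * B i (j + 1))) ∨
    -- (D9) (k ≥ j - 1)
    (∃ i j k, 1 ≤ i ∧ i < j ∧ j ≤ k + 1 ∧
      g = grel (B i j * X k) (X k * B i j)) }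

end BFGen

/-- The pure braided Thompson group `BF`, via its infinite presentation. -/
abbrev GBF : Type := PresentedGroup BFGen.bfRels

namespace GBF

/-- The generator `x_i` of `BF`. -/
def xg (i : ℕ) : GBF := PresentedGroup.of (BFGen.x i)

/-- The generator `α_{ij}` of `BF` (meaningful for `1 ≤ i < j`). -/
def ag (i j : ℕ) : GBF := PresentedGroup.of (BFGen.a (i - 1) (j - i - 1))

/-- The generator `β_{ij}` of `BF` (meaningful for `1 ≤ i < j`). -/
def bg (i j : ℕ) : GBF := PresentedGroup.of (BFGen.b (i - 1) (j - i - 1))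

end GBF


namespace BFF
abbrev V := Fin 6
def Xh : ℕ → FreeGroup V
  | 0 => .of 0
  | 1 => .of 1
  | (n+2) => (FreeGroup.of 0)⁻¹ * Xh (n+1) * FreeGroup.of 0
def Bp0 : ℕ → FreeGroup V
  | 0 => .of 2
  | 1 => .of 3
  | (q+2) => (FreeGroup.of 1)⁻¹ * Bp0 (q+1) * FreeGroup.of 1
def Bp1 : ℕ → FreeGroup V
  | 0 => .of 4
  | 1 => .of 5
  | (q+2) => ((FreeGroup.of 0)⁻¹ * FreeGroup.of 1 * FreeGroup.of 0)⁻¹ * Bp1 (q+1) *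
      ((FreeGroup.of 0)⁻¹ * FreeGroup.of 1 * FreeGroup.of 0)
def Bph : ℕ → ℕ → FreeGroup V
  | 0, q => Bp0 q
  | 1, q => Bp1 q
  | (p+2), q => (FreeGroup.of 0)⁻¹ * Bph (p+1) q * FreeGroup.of 0
def Bh (i j : ℕ) : FreeGroup V := Bph (i-1) (j-i-1)
def Ah (i j : ℕ) : FreeGroup V := (Bh i (j+1))⁻¹ * Bh i j
def Aph (p q : ℕ) : FreeGroup V := (Bph p (q+1))⁻¹ * Bph p q

lemma Bh_eq (p q : ℕ) : Bh (p+1) (p+q+2) = Bph p q := by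
  unfold Bh; congr 1 <;> omega

/-- bounded relators -/
def relOf : ℕ → ℕ → ℕ → ℕ → ℕ → FreeGroup V
  | 0, i, j, _, _ => if i < j then grel (Xh j * Xh i) (Xh i * Xh (j+1)) else 1
  | 1, r, s, i, j => if 1 ≤ r ∧ r < s ∧ ((s < i ∧ i < j) ∨ (1 ≤ i ∧ i < r ∧ s < j)) then
      grel ((Ah r s)⁻¹ * Ah i j * Ah r s) (Ah i j) else 1
  | 2, r, s, j, _ => if 1 ≤ r ∧ r < s ∧ s < j then
      grel ((Ah r s)⁻¹ * Ah s j * Ah r s) (Ah r j * Ah s j * (Ah r j)⁻¹) else 1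
  | 3, i, s, j, _ => if 1 ≤ i ∧ i < s ∧ s < j then
      grel ((Ah i s)⁻¹ * Ah i j * Ah i s)
        ((Ah i j * Ah s j) * Ah i j * (Ah i j * Ah s j)⁻¹) else 1
  | 4, r, i, s, j => if 1 ≤ r ∧ r < i ∧ i < s ∧ s < j then
      grel ((Ah r s)⁻¹ * Ah i j * Ah r s)
        ((Ah r j * Ah s j * (Ah r j)⁻¹ * (Ah s j)⁻¹) * Ah i j *
          (Ah r j * Ah s j * (Ah r j)⁻¹ * (Ah s j)⁻¹)⁻¹) else 1
  | 5, r, s, i, j => if 1 ≤ r ∧ r < s ∧ ((s < i ∧ i < j) ∨ (1 ≤ i ∧ i < r ∧ s < j)) then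
      grel ((Ah r s)⁻¹ * Bh i j * Ah r s) (Bh i j) else 1
  | 6, r, s, j, _ => if 1 ≤ r ∧ r < s ∧ s < j then
      grel ((Ah r s)⁻¹ * Bh s j * Ah r s) (Bh r j * Bh s j * (Bh r j)⁻¹) else 1
  | 7, i, s, j, _ => if 1 ≤ i ∧ i < s ∧ s < j then
      grel ((Ah i s)⁻¹ * Bh i j * Ah i s)
        ((Bh i j * Bh s j) * Bh i j * (Bh i j * Bh s j)⁻¹) else 1
  | 8, r, i, s, j => if 1 ≤ r ∧ r < i ∧ i < s ∧ s < j then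
      grel ((Ah r s)⁻¹ * Bh i j * Ah r s)
        ((Bh r j * Bh s j * (Bh r j)⁻¹ * (Bh s j)⁻¹) * Bh i j *
          (Bh r j * Bh s j * (Bh r j)⁻¹ * (Bh s j)⁻¹)⁻¹) else 1
  | 9, i, j, _, _ => if 1 ≤ i ∧ i < j then grel (Bh i j) (Bh i (j+1) * Ah i j) else 1
  | 10, i, j, k, _ => if 1 ≤ i ∧ i < j ∧ k + 1 < i then
      grel (Ah i j * Xh k) (Xh k * Ah (i+1) (j+1)) else 1
  | 11, i, j, _, _ => if 1 ≤ i ∧ i < j then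
      grel (Ah i j * Xh (i-1)) (Xh (i-1) * Ah (i+1) (j+1) * Ah i (j+1)) else 1
  | 12, i, j, k, _ => if 1 ≤ i ∧ i < j ∧ i ≤ k ∧ k + 1 < j then
      grel (Ah i j * Xh k) (Xh k * Ah i (j+1)) else 1
  | 13, i, j, _, _ => if 1 ≤ i ∧ i < j then
      grel (Ah i j * Xh (j-1)) (Xh (j-1) * Ah i (j+1) * Ah i j) else 1
  | 14, i, j, k, _ => if 1 ≤ i ∧ i < j ∧ j ≤ k then
      grel (Ah i j * Xh k) (Xh k * Ah i j) else 1
  | 15, i, j, k, _ => if 1 ≤ i ∧ i < j ∧ k + 1 < i then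
      grel (Bh i j * Xh k) (Xh k * Bh (i+1) (j+1)) else 1
  | 16, i, j, _, _ => if 1 ≤ i ∧ i < j then
      grel (Bh i j * Xh (i-1)) (Xh (i-1) * Bh (i+1) (j+1) * Bh i (j+1)) else 1
  | 17, i, j, k, _ => if 1 ≤ i ∧ i < j ∧ i ≤ k ∧ k + 1 < j then
      grel (Bh i j * Xh k) (Xh k * Bh i (j+1)) else 1
  | 18, i, j, k, _ => if 1 ≤ i ∧ i < j ∧ j ≤ k + 1 then
      grel (Bh i j * Xh k) (Xh k * Bh i j) else 1
  | _, _, _, _, _ => 1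

abbrev idx : Type := Fin 19 × Fin 13 × Fin 13 × Fin 13 × Fin 13
def F (t : idx) : FreeGroup V := relOf t.1 t.2.1 t.2.2.1 t.2.2.2.1 t.2.2.2.2
def S : Set (FreeGroup V) := Set.range F
abbrev H : Type := PresentedGroup S
def hmk : FreeGroup V →* H := PresentedGroup.mk S

lemma hmk_rel {f p1 p2 p3 p4 : ℕ} (hf : f ≤ 18) (h1 : p1 ≤ 12) (h2 : p2 ≤ 12)
    (h3 : p3 ≤ 12) (h4 : p4 ≤ 12) : hmk (relOf f p1 p2 p3 p4) = 1 := by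
  have hm : relOf f p1 p2 p3 p4 ∈ S :=
    ⟨⟨⟨f, by omega⟩, ⟨p1, by omega⟩, ⟨p2, by omega⟩, ⟨p3, by omega⟩, ⟨p4, by omega⟩⟩, rfl⟩
  exact (QuotientGroup.eq_one_iff _).2 (Subgroup.subset_normalClosure hm)

lemma grel_eq {u v : FreeGroup V} (h : hmk (grel u v) = 1) : hmk u = hmk v := by
  rw [grel, map_mul, map_inv, mul_inv_eq_one] at h; exact h

end BFF

namespace BFF

def xx (n : ℕ) : H := hmk (Xh n)
def bb (i j : ℕ) : H := hmk (Bh i j)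
def aa (i j : ℕ) : H := hmk (Ah i j)
def c (k : ℕ) (g : H) : H := (xx k)⁻¹ * g * xx k

lemma aa_eq (i j : ℕ) : aa i j = (bb i (j+1))⁻¹ * bb i j := by
  rw [aa, Ah, map_mul, map_inv]; rfl

lemma c_mul (k : ℕ) (g h : H) : c k (g * h) = c k g * c k h := by
  simp [c, mul_assoc]
lemma c_inv (k : ℕ) (g : H) : c k g⁻¹ = (c k g)⁻¹ := by
  simp [c, mul_assoc]
lemma conj_swap {k : ℕ} {u v : H} (h : u * xx k = xx k * v) : c k u = v := by
  rw [c, mul_assoc, h, ← mul_assoc, inv_mul_cancel, one_mul]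
lemma swap_of_conj {k : ℕ} {u v : H} (h : c k u = v) : u * xx k = xx k * v := by
  rw [← h, c]; group
lemma comm_of_cfix {k : ℕ} {g : H} (h : c k g = g) : xx k * g * (xx k)⁻¹ = g := by
  conv_lhs => rw [← h]
  rw [c]; group

/-! ### Definitional recursions -/

lemma xdef (n : ℕ) (hn : 1 ≤ n) : xx (n+1) = c 0 (xx n) := by
  obtain ⟨m, rfl⟩ : ∃ m, n = m + 1 := ⟨n - 1, by omega⟩
  show hmk (Xh (m+2)) = _
  rw [show Xh (m+2) = (Xh 0)⁻¹ * Xh (m+1) * Xh 0 from rfl]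
  rw [map_mul, map_mul, map_inv]; rfl

lemma bb_eq (p q : ℕ) : bb (p+1) (p+q+2) = hmk (Bph p q) := by
  rw [bb, Bh_eq]

lemma bdef1 (j : ℕ) (hj : 3 ≤ j) : bb 1 (j+1) = c 1 (bb 1 j) := by
  obtain ⟨q, rfl⟩ : ∃ q, j = q + 3 := ⟨j - 3, by omega⟩
  rw [show (q+3+1) = 0 + (q+2) + 2 by omega, show (q+3) = 0 + (q+1) + 2 by omega,
    show (1:ℕ) = 0 + 1 from rfl, bb_eq, bb_eq,
    show Bph 0 (q+2) = (Xh 1)⁻¹ * Bph 0 (q+1) * Xh 1 from rfl]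
  rw [map_mul, map_mul, map_inv]; rfl

lemma bdef2 (j : ℕ) (hj : 4 ≤ j) : bb 2 (j+1) = c 2 (bb 2 j) := by
  obtain ⟨q, rfl⟩ : ∃ q, j = q + 4 := ⟨j - 4, by omega⟩
  rw [show (q+4+1) = 1 + (q+2) + 2 by omega, show (q+4) = 1 + (q+1) + 2 by omega,
    show (2:ℕ) = 1 + 1 from rfl, bb_eq, bb_eq,
    show Bph 1 (q+2) = (Xh 2)⁻¹ * Bph 1 (q+1) * Xh 2 from rfl]
  rw [map_mul, map_mul, map_inv]; rfl

lemma bdef0 (i j : ℕ) (hi : 2 ≤ i) (hij : i < j) : bb (i+1) (j+1) = c 0 (bb i j) := by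
  obtain ⟨p, rfl⟩ : ∃ p, i = p + 2 := ⟨i - 2, by omega⟩
  obtain ⟨q, rfl⟩ : ∃ q, j = p + q + 3 := ⟨j - p - 3, by omega⟩
  rw [show (p+q+3+1) = (p+2) + q + 2 by omega, show (p+2+1) = (p+2)+1 by omega, bb_eq,
    show (p+q+3) = (p+1) + q + 2 by omega, show (p+2) = (p+1)+1 by omega, bb_eq,
    show Bph (p+2) q = (Xh 0)⁻¹ * Bph (p+1) q * Xh 0 from rfl]
  rw [map_mul, map_mul, map_inv]; rfl

/-! ### Family (A): Thompson's F relations -/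

lemma baseA {i j j' : ℕ} (hij : i < j) (hj : j ≤ 12) (h' : j' = j + 1) :
    xx j * xx i = xx i * xx j' := by
  subst h'
  have h := grel_eq (u := Xh j * Xh i) (v := Xh i * Xh (j+1)) (by
    have := hmk_rel (f := 0) (p1 := i) (p2 := j) (p3 := 0) (p4 := 0)
      (by omega) (by omega) hj (by omega) (by omega)
    rwa [relOf, if_pos hij] at this)
  rw [map_mul, map_mul] at h
  exact h

lemma ccOf {i j : ℕ} (hrel : xx j * xx i = xx i * xx (j+1)) (g : H) :
    c i (c j g) = c (j+1) (c i g) := by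
  have e1 : c i (c j g) = (xx j * xx i)⁻¹ * g * (xx j * xx i) := by
    rw [c, c]; group
  have e2 : c (j+1) (c i g) = (xx i * xx (j+1))⁻¹ * g * (xx i * xx (j+1)) := by
    rw [c, c]; group
  rw [e1, e2, hrel]

lemma cA0 {j j' : ℕ} (hj : 1 ≤ j) (h' : j' = j + 1) : c 0 (xx j) = xx j' := by
  subst h'; exact (xdef j hj).symm

lemma swapA0 {j j' : ℕ} (hj : 1 ≤ j) (h' : j' = j + 1) : xx j * xx 0 = xx 0 * xx j' := by
  subst h'; exact swap_of_conj (cA0 hj rfl)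

lemma cA1 : ∀ j, 2 ≤ j → c 1 (xx j) = xx (j+1) := by
  intro j
  induction j using Nat.strong_induction_on with
  | _ j IH =>
    intro hj
    rcases le_or_gt j 12 with hN | hN
    · exact conj_swap (baseA (i := 1) (j := j) (by omega) hN rfl)
    · obtain ⟨m, rfl⟩ : ∃ m, j = m + 13 := ⟨j - 13, by omega⟩
      have h12 : xx 2 * xx 1 = xx 1 * xx 3 :=
        swap_of_conj (IH 2 (by omega) (by omega))
      have h1 : c 1 (xx (m+12)) = xx (m+13) := by
        have := IH (m+12) (by omega) (by omega)
        rwa [show m+12+1 = m+13 by omega] at this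
      have h1' : c 1 (xx (m+11)) = xx (m+12) := by
        have := IH (m+11) (by omega) (by omega)
        rwa [show m+11+1 = m+12 by omega] at this
      have hA2 : c 2 (xx (m+12)) = xx (m+13) := by
        have := congrArg (c 0) h1'
        rw [ccOf (swapA0 (j := 1) (by omega) rfl) (xx (m+11)),
          cA0 (j := m+11) (j' := m+12) (by omega) (by omega), cA0 (j := m+12) (j' := m+13) (by omega) (by omega)] at this
        exact this
      have hA3 : c 3 (xx (m+13)) = xx (m+14) := by
        have := congrArg (c 0) hA2
        rw [ccOf (swapA0 (j := 2) (by omega) rfl) (xx (m+12)),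
          cA0 (j := m+12) (j' := m+13) (by omega) (by omega), cA0 (j := m+13) (j' := m+14) (by omega) (by omega)] at this
        exact this
      calc c 1 (xx (m+13)) = c 1 (c 2 (xx (m+12))) := by rw [hA2]
        _ = c 3 (c 1 (xx (m+12))) := ccOf h12 _
        _ = c 3 (xx (m+13)) := by rw [h1]
        _ = xx (m+14) := hA3

lemma cA : ∀ i j j', i < j → j' = j + 1 → c i (xx j) = xx j' := by
  intro i
  induction i using Nat.strong_induction_on with
  | _ i IH =>
    intro j j' hij h'
    subst h'
    match i, hij with
    | 0, hij => exact cA0 (by omega) rfl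
    | 1, hij => exact cA1 j (by omega)
    | (n+2), hij =>
      obtain ⟨m, rfl⟩ : ∃ m, j = m + 1 := ⟨j - 1, by omega⟩
      rw [xdef m (by omega), ← ccOf (swapA0 (j := n+1) (by omega) rfl) (xx m),
        IH (n+1) (by omega) m (m+1) (by omega) rfl]
      exact cA0 (by omega) rfl

lemma relA {i j j' : ℕ} (hij : i < j) (h' : j' = j + 1) : xx j * xx i = xx i * xx j' := by
  subst h'; exact swap_of_conj (cA i j (j+1) hij rfl)

/-- the key commutation tool: `c i ∘ c j = c (j+1) ∘ c i` for `i < j`. -/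
lemma cc {a b b' : ℕ} (hab : a < b) (hb' : b' = b + 1) (g : H) :
    c b' (c a g) = c a (c b g) := by
  subst hb'; exact (ccOf (relA hab rfl) g).symm

/-- flexible definitional lemmas -/
lemma bdef1' {j j' : ℕ} (h : 3 ≤ j) (h' : j' = j + 1) : bb 1 j' = c 1 (bb 1 j) := by
  subst h'; exact bdef1 j h
lemma bdef2' {j j' : ℕ} (h : 4 ≤ j) (h' : j' = j + 1) : bb 2 j' = c 2 (bb 2 j) := by
  subst h'; exact bdef2 j h
lemma bdef0' {i j i' j' : ℕ} (h : 2 ≤ i) (hij : i < j) (hi' : i' = i + 1)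
    (hj' : j' = j + 1) : bb i' j' = c 0 (bb i j) := by
  subst hi'; subst hj'; exact bdef0 i j h hij

/-! ### D-families: base lemmas -/

lemma baseD8 {i j k j' : ℕ} (h1 : 1 ≤ i) (h2 : i ≤ k) (h3 : k+1 < j) (hj : j ≤ 12)
    (h' : j' = j + 1) : c k (bb i j) = bb i j' := by
  subst h'
  have h := grel_eq (u := Bh i j * Xh k) (v := Xh k * Bh i (j+1)) (by
    have := hmk_rel (f := 17) (p1 := i) (p2 := j) (p3 := k) (p4 := 0)
      (by omega) (by omega) hj (by omega) (by omega)
    rwa [relOf, if_pos ⟨h1, by omega, h2, h3⟩] at this)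
  rw [map_mul, map_mul] at h
  exact conj_swap h

lemma baseD6 {i j k i' j' : ℕ} (h2 : k+1 < i) (h3 : i < j) (hj : j ≤ 12)
    (hi' : i' = i + 1) (hj' : j' = j + 1) : c k (bb i j) = bb i' j' := by
  subst hi'; subst hj'
  have h := grel_eq (u := Bh i j * Xh k) (v := Xh k * Bh (i+1) (j+1)) (by
    have := hmk_rel (f := 15) (p1 := i) (p2 := j) (p3 := k) (p4 := 0)
      (by omega) (by omega) hj (by omega) (by omega)
    rwa [relOf, if_pos ⟨by omega, h3, h2⟩] at this)
  rw [map_mul, map_mul] at h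
  exact conj_swap h

lemma baseD7 {i j k i' j' : ℕ} (h1 : 1 ≤ i) (h3 : i < j) (hj : j ≤ 12) (hk : k = i - 1)
    (hi' : i' = i + 1) (hj' : j' = j + 1) : c k (bb i j) = bb i' j' * bb i j' := by
  subst hk; subst hi'; subst hj'
  have h := grel_eq (u := Bh i j * Xh (i-1)) (v := Xh (i-1) * Bh (i+1) (j+1) * Bh i (j+1)) (by
    have := hmk_rel (f := 16) (p1 := i) (p2 := j) (p3 := 0) (p4 := 0)
      (by omega) (by omega) hj (by omega) (by omega)
    rwa [relOf, if_pos ⟨h1, h3⟩] at this)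
  rw [map_mul, map_mul, map_mul, mul_assoc (hmk (Xh (i-1)))] at h
  exact conj_swap h

lemma baseD9 {i j k : ℕ} (h1 : 1 ≤ i) (h3 : i < j) (hjk : j ≤ k+1) (hj : j ≤ 12)
    (hk : k ≤ 12) : c k (bb i j) = bb i j := by
  have h := grel_eq (u := Bh i j * Xh k) (v := Xh k * Bh i j) (by
    have := hmk_rel (f := 18) (p1 := i) (p2 := j) (p3 := k) (p4 := 0)
      (by omega) (by omega) hj hk (by omega)
    rwa [relOf, if_pos ⟨h1, h3, hjk⟩] at this)
  rw [map_mul, map_mul] at h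
  exact conj_swap h

/-! ### D-families: statements -/

def d8s (j : ℕ) : Prop := ∀ i k j', 1 ≤ i → i ≤ k → k+1 < j → j' = j + 1 →
  c k (bb i j) = bb i j'
def d6s (j : ℕ) : Prop := ∀ i k i' j', k+1 < i → i < j → i' = i + 1 → j' = j + 1 →
  c k (bb i j) = bb i' j'
def d7s (j : ℕ) : Prop := ∀ i k i' j', 1 ≤ i → i < j → k = i - 1 → i' = i + 1 → j' = j + 1 →
  c k (bb i j) = bb i' j' * bb i j'
def d9s (j : ℕ) : Prop := ∀ i k, 1 ≤ i → i < j → j ≤ k+1 → c k (bb i j) = bb i j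

lemma d9ext {j : ℕ} (hj : 2 ≤ j)
    (hbase : ∀ i k, 1 ≤ i → i < j → j ≤ k+1 → k ≤ j → c k (bb i j) = bb i j) : d9s j := by
  intro i k h1 h2 h3
  induction k using Nat.strong_induction_on with
  | _ k IHk =>
  rcases le_or_gt k j with h | h
  · exact hbase i k h1 h2 h3 h
  · have hxk : xx k = (xx (j-1))⁻¹ * xx (k-1) * xx (j-1) := by
      have h5 := relA (i := j-1) (j := k-1) (j' := k) (by omega) (by omega)
      calc xx k = (xx (j-1))⁻¹ * (xx (j-1) * xx k) := by group
        _ = (xx (j-1))⁻¹ * (xx (k-1) * xx (j-1)) := by rw [h5]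
        _ = (xx (j-1))⁻¹ * xx (k-1) * xx (j-1) := by group
    have hk1 : c (k-1) (bb i j) = bb i j := IHk (k-1) (by omega) (by omega)
    have hj1 : c (j-1) (bb i j) = bb i j := hbase i (j-1) h1 h2 (by omega) (by omega)
    have hcomm := comm_of_cfix hj1
    have e : c k (bb i j) = c (j-1) (c (k-1) (xx (j-1) * bb i j * (xx (j-1))⁻¹)) := by
      rw [c, c, c, hxk]; group
    rw [e, hcomm, hk1, hj1]

/-! ### D-families: the master induction -/

lemma Dmaster : ∀ j, d8s j ∧ d6s j ∧ d7s j ∧ d9s j := by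
  intro j
  induction j using Nat.strong_induction_on with
  | _ j IH =>
  have IH8 : ∀ jj, jj < j → d8s jj := fun jj h => (IH jj h).1
  have IH6 : ∀ jj, jj < j → d6s jj := fun jj h => (IH jj h).2.1
  have IH7 : ∀ jj, jj < j → d7s jj := fun jj h => (IH jj h).2.2.1
  have IH9 : ∀ jj, jj < j → d9s jj := fun jj h => (IH jj h).2.2.2
  rcases le_or_gt j 12 with hN | hN
  · refine ⟨?_, ?_, ?_, ?_⟩
    · intro i k j' h1 h2 h3 h'
      exact baseD8 h1 h2 h3 hN h'
    · intro i k i' j' h2 h3 hi' hj'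
      exact baseD6 h2 h3 hN hi' hj'
    · intro i k i' j' h1 h3 hk hi' hj'
      exact baseD7 h1 h3 hN hk hi' hj'
    · rcases le_or_gt j 1 with hj1 | hj1
      · intro i k h1 h2 h3; omega
      · exact d9ext hj1 (fun i k h1 h2 h3 h4 => baseD9 h1 h2 h3 hN (by omega))
  · -- j ≥ 13
    -- Phase 1 : d8s j
    have E1a : ∀ k j'', 3 ≤ k → k+1 < j → j'' = j+1 → c k (bb 1 j) = bb 1 j'' := by
      intro k j'' hk hkj h''
      rw [bdef1' (j := j-1) (j' := j) (by omega) (by omega),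
        cc (a := 1) (b := k-1) (b' := k) (by omega) (by omega),
        IH8 (j-1) (by omega) 1 (k-1) j (by omega) (by omega) (by omega) (by omega),
        ← bdef1' (j := j) (j' := j'') (by omega) h'']
    have E1 : ∀ k j'', 1 ≤ k → k+1 < j → j'' = j+1 → c k (bb 1 j) = bb 1 j'' := by
      intro k j'' hk hkj h''
      rcases le_or_gt 3 k with h3 | h3
      · exact E1a k j'' h3 hkj h''
      · obtain _|_|_|_ := k
        · omega
        · exact (bdef1' (j := j) (j' := j'') (by omega) h'').symm
        · -- k = 2
          have e := IH8 (j-1) (by omega) 1 3 j (by omega) (by omega) (by omega) (by omega)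
          rw [← e, ← cc (a := 2) (b := 3) (b' := 4) (by omega) (by omega),
            IH8 (j-1) (by omega) 1 2 j (by omega) (by omega) (by omega) (by omega)]
          exact E1a 4 j'' (by omega) (by omega) h''
        · omega
    have E2a : ∀ k j'', 4 ≤ k → k+1 < j → j'' = j+1 → c k (bb 2 j) = bb 2 j'' := by
      intro k j'' hk hkj h''
      rw [bdef2' (j := j-1) (j' := j) (by omega) (by omega),
        cc (a := 2) (b := k-1) (b' := k) (by omega) (by omega),
        IH8 (j-1) (by omega) 2 (k-1) j (by omega) (by omega) (by omega) (by omega),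
        ← bdef2' (j := j) (j' := j'') (by omega) h'']
    have E2 : ∀ k j'', 2 ≤ k → k+1 < j → j'' = j+1 → c k (bb 2 j) = bb 2 j'' := by
      intro k j'' hk hkj h''
      rcases le_or_gt 4 k with h4 | h4
      · exact E2a k j'' h4 hkj h''
      · obtain _|_|_|_|_ := k
        · omega
        · omega
        · exact (bdef2' (j := j) (j' := j'') (by omega) h'').symm
        · -- k = 3
          have e := IH8 (j-1) (by omega) 2 4 j (by omega) (by omega) (by omega) (by omega)
          rw [← e, ← cc (a := 3) (b := 4) (b' := 5) (by omega) (by omega),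
            IH8 (j-1) (by omega) 2 3 j (by omega) (by omega) (by omega) (by omega)]
          exact E2a 5 j'' (by omega) (by omega) h''
        · omega
    have hd8 : d8s j := by
      intro i k j' h1 h2 h3 h'
      rcases le_or_gt 3 i with h3i | h3i
      · rw [bdef0' (i := i-1) (j := j-1) (i' := i) (j' := j)
            (by omega) (by omega) (by omega) (by omega),
          cc (a := 0) (b := k-1) (b' := k) (by omega) (by omega),
          IH8 (j-1) (by omega) (i-1) (k-1) j (by omega) (by omega) (by omega) (by omega)]
        exact (bdef0' (i := i-1) (j := j) (i' := i) (j' := j')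
          (by omega) (by omega) (by omega) (by omega)).symm
      · obtain _|_|_|_ := i
        · omega
        · exact E1 k j' (by omega) h3 h'
        · exact E2 k j' (by omega) h3 h'
        · omega
    -- Phase 2 : d7s j
    have hd7 : d7s j := by
      intro i k i' j' h1 hij hk hi' hj'
      subst hk; subst hi'; subst hj'
      rcases le_or_gt 3 i with h3i | h3i
      · rw [bdef0' (i := i-1) (j := j-1) (i' := i) (j' := j)
            (by omega) (by omega) (by omega) (by omega),
          cc (a := 0) (b := i-2) (b' := i-1) (by omega) (by omega),
          IH7 (j-1) (by omega) (i-1) (i-2) i j (by omega) (by omega) (by omega) (by omega)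
            (by omega),
          c_mul,
          ← bdef0' (i := i) (j := j) (i' := i+1) (j' := j+1) (by omega) (by omega) rfl rfl,
          ← bdef0' (i := i-1) (j := j) (i' := i) (j' := j+1) (by omega) (by omega)
            (by omega) rfl]
      · obtain _|_|_|_ := i
        · omega
        · -- i = 1
          rw [show (1:ℕ) - 1 = 0 from rfl,
            bdef1' (j := j-1) (j' := j) (by omega) (by omega),
            ← cc (a := 0) (b := 1) (b' := 2) (by omega) rfl,
            IH7 (j-1) (by omega) 1 0 2 j (by omega) (by omega) rfl rfl (by omega),
            c_mul,
            ← bdef2' (j := j) (j' := j+1) (by omega) rfl,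
            hd8 1 2 (j+1) (by omega) (by omega) (by omega) rfl]
        · -- i = 2
          rw [show (2:ℕ) - 1 = 1 from rfl,
            bdef2' (j := j-1) (j' := j) (by omega) (by omega),
            ← cc (a := 1) (b := 2) (b' := 3) (by omega) rfl,
            IH7 (j-1) (by omega) 2 1 3 j (by omega) (by omega) rfl rfl (by omega),
            c_mul,
            hd8 3 3 (j+1) (by omega) (by omega) (by omega) rfl,
            hd8 2 3 (j+1) (by omega) (by omega) (by omega) rfl]
        · omega
    -- Phase 3 : d6s j
    have E6one : ∀ i i', 2 < i → i < j → i' = i + 1 → c 1 (bb i j) = bb i' (j+1) := by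
      intro i
      induction i using Nat.strong_induction_on with
      | _ i IHi =>
      intro i' hi2 hij hi'
      subst hi'
      rcases le_or_gt i (j-3) with hle | hgt
      · have e := IH8 (j-1) (by omega) i i j (by omega) (by omega) (by omega) (by omega)
        rw [← e, ← cc (a := 1) (b := i) (b' := i+1) (by omega) rfl,
          IH6 (j-1) (by omega) i 1 (i+1) j (by omega) (by omega) rfl (by omega)]
        exact hd8 (i+1) (i+1) (j+1) (by omega) (by omega) (by omega) rfl
      · have h7 := IH7 (j-1) (by omega) (i-1) (i-2) i j (by omega) (by omega) (by omega)
          (by omega) (by omega)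
        have e : bb i j = c (i-2) (bb (i-1) (j-1)) * (bb (i-1) j)⁻¹ := by
          rw [h7]; group
        rw [e, c_mul, c_inv,
          ← cc (a := 1) (b := i-2) (b' := i-1) (by omega) (by omega),
          IH6 (j-1) (by omega) (i-1) 1 i j (by omega) (by omega) (by omega) (by omega),
          hd7 i (i-1) (i+1) (j+1) (by omega) (by omega) rfl rfl rfl,
          IHi (i-1) (by omega) i (by omega) (by omega) (by omega)]
        group
    have hd6 : d6s j := by
      intro i k i' j' hki hij hi' hj'
      subst hi'; subst hj'
      obtain _|_|km := k
      · exact (bdef0' (i := i) (j := j) (i' := i+1) (j' := j+1)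
          (by omega) (by omega) rfl rfl).symm
      · exact E6one i (i+1) (by omega) hij rfl
      · rw [bdef0' (i := i-1) (j := j-1) (i' := i) (j' := j)
            (by omega) (by omega) (by omega) (by omega),
          cc (a := 0) (b := km+1) (b' := km+2) (by omega) rfl,
          IH6 (j-1) (by omega) (i-1) (km+1) i j (by omega) (by omega) (by omega) (by omega)]
        exact (bdef0' (i := i) (j := j) (i' := i+1) (j' := j+1)
          (by omega) (by omega) rfl rfl).symm
    -- Phase 4 : d9s j
    have hd9 : d9s j := by
      apply d9ext (by omega)
      intro i k h1 h2 h3 h4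
      rcases le_or_gt i (j-3) with hle | hgt
      · have h9 := IH9 (j-1) (by omega) i (k-1) (by omega) (by omega) (by omega)
        have h5 := congrArg (c i) h9
        rw [← cc (a := i) (b := k-1) (b' := k) (by omega) (by omega),
          IH8 (j-1) (by omega) i i j (by omega) (by omega) (by omega) (by omega)] at h5
        exact h5
      · have h9 := IH9 (j-1) (by omega) (i-1) (k-1) (by omega) (by omega) (by omega)
        have h5 := congrArg (c 0) h9
        rw [← cc (a := 0) (b := k-1) (b' := k) (by omega) (by omega),
          ← bdef0' (i := i-1) (j := j-1) (i' := i) (j' := j)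
            (by omega) (by omega) (by omega) (by omega)] at h5
        exact h5
    exact ⟨hd8, hd6, hd7, hd9⟩

lemma d8 {j : ℕ} : d8s j := (Dmaster j).1
lemma d6 {j : ℕ} : d6s j := (Dmaster j).2.1
lemma d7 {j : ℕ} : d7s j := (Dmaster j).2.2.1
lemma d9 {j : ℕ} : d9s j := (Dmaster j).2.2.2


/-! ### conjugation rules for the α-generators (via C-definition) -/

lemma caD3 (r s k s' : ℕ) (h1 : 1 ≤ r) (h2 : r ≤ k) (h3 : k+1 < s) (h' : s' = s + 1) :
    c k (aa r s) = aa r s' := by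
  subst h'
  rw [aa_eq, aa_eq, c_mul, c_inv,
    d8 (j := s+1) r k (s+2) h1 h2 (by omega) rfl,
    d8 (j := s) r k (s+1) h1 h2 (by omega) rfl]

lemma caD5 (r s k : ℕ) (h1 : 1 ≤ r) (h2 : r < s) (h3 : s ≤ k) : c k (aa r s) = aa r s := by
  rw [aa_eq, c_mul, c_inv,
    d9 (j := s+1) r k h1 (by omega) (by omega),
    d9 (j := s) r k h1 (by omega) (by omega)]

lemma caD1 (r s k r' s' : ℕ) (h0 : k+1 < r) (h4 : r < s) (hr' : r' = r + 1)
    (hs' : s' = s + 1) : c k (aa r s) = aa r' s' := by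
  subst hr'; subst hs'
  rw [aa_eq, aa_eq, c_mul, c_inv,
    d6 (j := s+1) r k (r+1) (s+2) h0 (by omega) rfl rfl,
    d6 (j := s) r k (r+1) (s+1) h0 (by omega) rfl rfl]

lemma caD4 (r s k s' : ℕ) (h1 : 1 ≤ r) (h2 : r < s) (hk : k = s - 1) (h' : s' = s + 1) :
    c k (aa r s) = aa r s' * aa r s := by
  subst hk; subst h'
  rw [aa_eq, c_mul, c_inv,
    d8 (j := s+1) r (s-1) (s+2) h1 (by omega) (by omega) rfl,
    d9 (j := s) r (s-1) h1 (by omega) (by omega),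
    aa_eq, show s+1+1 = s+2 by omega]
  group

/-! ### B-families: base lemmas -/

lemma baseB1 {r s i j : ℕ} (h1 : 1 ≤ r) (h2 : r < s) (h3 : s < j) (h4 : 1 ≤ i) (h5 : i < j)
    (hreg : s < i ∨ i < r) (hj : j ≤ 12) :
    (aa r s)⁻¹ * aa i j * aa r s = aa i j := by
  have h := grel_eq (u := (Ah r s)⁻¹ * Ah i j * Ah r s) (v := Ah i j) (by
    have := hmk_rel (f := 1) (p1 := r) (p2 := s) (p3 := i) (p4 := j)
      (by omega) (by omega) (by omega) (by omega) hj
    rwa [relOf, if_pos ⟨h1, h2, by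
      rcases hreg with h | h
      · exact Or.inl ⟨h, h5⟩
      · exact Or.inr ⟨h4, h, h3⟩⟩] at this)
  simp only [map_mul, map_inv] at h
  exact h

lemma baseB2 {r s j : ℕ} (h1 : 1 ≤ r) (h2 : r < s) (h3 : s < j) (hj : j ≤ 12) :
    (aa r s)⁻¹ * aa s j * aa r s = aa r j * aa s j * (aa r j)⁻¹ := by
  have h := grel_eq (u := (Ah r s)⁻¹ * Ah s j * Ah r s) (v := Ah r j * Ah s j * (Ah r j)⁻¹) (by
    have := hmk_rel (f := 2) (p1 := r) (p2 := s) (p3 := j) (p4 := 0)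
      (by omega) (by omega) (by omega) (by omega) (by omega)
    rwa [relOf, if_pos ⟨h1, h2, h3⟩] at this)
  simp only [map_mul, map_inv] at h
  exact h

lemma baseB3 {i s j : ℕ} (h1 : 1 ≤ i) (h2 : i < s) (h3 : s < j) (hj : j ≤ 12) :
    (aa i s)⁻¹ * aa i j * aa i s = (aa i j * aa s j) * aa i j * (aa i j * aa s j)⁻¹ := by
  have h := grel_eq (u := (Ah i s)⁻¹ * Ah i j * Ah i s)
      (v := (Ah i j * Ah s j) * Ah i j * (Ah i j * Ah s j)⁻¹) (by
    have := hmk_rel (f := 3) (p1 := i) (p2 := s) (p3 := j) (p4 := 0)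
      (by omega) (by omega) (by omega) (by omega) (by omega)
    rwa [relOf, if_pos ⟨h1, h2, h3⟩] at this)
  simp only [map_mul, map_inv] at h
  exact h

lemma baseB4 {r i s j : ℕ} (h1 : 1 ≤ r) (h2 : r < i) (h3 : i < s) (h4 : s < j) (hj : j ≤ 12) :
    (aa r s)⁻¹ * aa i j * aa r s =
      (aa r j * aa s j * (aa r j)⁻¹ * (aa s j)⁻¹) * aa i j *
        (aa r j * aa s j * (aa r j)⁻¹ * (aa s j)⁻¹)⁻¹ := by
  have h := grel_eq (u := (Ah r s)⁻¹ * Ah i j * Ah r s)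
      (v := (Ah r j * Ah s j * (Ah r j)⁻¹ * (Ah s j)⁻¹) * Ah i j *
        (Ah r j * Ah s j * (Ah r j)⁻¹ * (Ah s j)⁻¹)⁻¹) (by
    have := hmk_rel (f := 4) (p1 := r) (p2 := i) (p3 := s) (p4 := j)
      (by omega) (by omega) (by omega) (by omega) (by omega)
    rwa [relOf, if_pos ⟨h1, h2, h3, h4⟩] at this)
  simp only [map_mul, map_inv] at h
  exact h

lemma baseB5 {r s i j : ℕ} (h1 : 1 ≤ r) (h2 : r < s) (h3 : s < j) (h4 : 1 ≤ i) (h5 : i < j)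
    (hreg : s < i ∨ i < r) (hj : j ≤ 12) :
    (aa r s)⁻¹ * bb i j * aa r s = bb i j := by
  have h := grel_eq (u := (Ah r s)⁻¹ * Bh i j * Ah r s) (v := Bh i j) (by
    have := hmk_rel (f := 5) (p1 := r) (p2 := s) (p3 := i) (p4 := j)
      (by omega) (by omega) (by omega) (by omega) hj
    rwa [relOf, if_pos ⟨h1, h2, by
      rcases hreg with h | h
      · exact Or.inl ⟨h, h5⟩
      · exact Or.inr ⟨h4, h, h3⟩⟩] at this)
  simp only [map_mul, map_inv] at h
  exact h

lemma baseB6 {r s j : ℕ} (h1 : 1 ≤ r) (h2 : r < s) (h3 : s < j) (hj : j ≤ 12) :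
    (aa r s)⁻¹ * bb s j * aa r s = bb r j * bb s j * (bb r j)⁻¹ := by
  have h := grel_eq (u := (Ah r s)⁻¹ * Bh s j * Ah r s) (v := Bh r j * Bh s j * (Bh r j)⁻¹) (by
    have := hmk_rel (f := 6) (p1 := r) (p2 := s) (p3 := j) (p4 := 0)
      (by omega) (by omega) (by omega) (by omega) (by omega)
    rwa [relOf, if_pos ⟨h1, h2, h3⟩] at this)
  simp only [map_mul, map_inv] at h
  exact h

lemma baseB7 {i s j : ℕ} (h1 : 1 ≤ i) (h2 : i < s) (h3 : s < j) (hj : j ≤ 12) :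
    (aa i s)⁻¹ * bb i j * aa i s = (bb i j * bb s j) * bb i j * (bb i j * bb s j)⁻¹ := by
  have h := grel_eq (u := (Ah i s)⁻¹ * Bh i j * Ah i s)
      (v := (Bh i j * Bh s j) * Bh i j * (Bh i j * Bh s j)⁻¹) (by
    have := hmk_rel (f := 7) (p1 := i) (p2 := s) (p3 := j) (p4 := 0)
      (by omega) (by omega) (by omega) (by omega) (by omega)
    rwa [relOf, if_pos ⟨h1, h2, h3⟩] at this)
  simp only [map_mul, map_inv] at h
  exact h

lemma baseB8 {r i s j : ℕ} (h1 : 1 ≤ r) (h2 : r < i) (h3 : i < s) (h4 : s < j) (hj : j ≤ 12) :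
    (aa r s)⁻¹ * bb i j * aa r s =
      (bb r j * bb s j * (bb r j)⁻¹ * (bb s j)⁻¹) * bb i j *
        (bb r j * bb s j * (bb r j)⁻¹ * (bb s j)⁻¹)⁻¹ := by
  have h := grel_eq (u := (Ah r s)⁻¹ * Bh i j * Ah r s)
      (v := (Bh r j * Bh s j * (Bh r j)⁻¹ * (Bh s j)⁻¹) * Bh i j *
        (Bh r j * Bh s j * (Bh r j)⁻¹ * (Bh s j)⁻¹)⁻¹) (by
    have := hmk_rel (f := 8) (p1 := r) (p2 := i) (p3 := s) (p4 := j)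
      (by omega) (by omega) (by omega) (by omega) (by omega)
    rwa [relOf, if_pos ⟨h1, h2, h3, h4⟩] at this)
  simp only [map_mul, map_inv] at h
  exact h


/-! ### B-families: statements -/

def b1s (j : ℕ) : Prop := ∀ r s i, 1 ≤ r → r < s → s < j → 1 ≤ i → i < j → (s < i ∨ i < r) →
  (aa r s)⁻¹ * aa i j * aa r s = aa i j
def b2s (j : ℕ) : Prop := ∀ r s, 1 ≤ r → r < s → s < j →
  (aa r s)⁻¹ * aa s j * aa r s = aa r j * aa s j * (aa r j)⁻¹
def b3s (j : ℕ) : Prop := ∀ i s, 1 ≤ i → i < s → s < j →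
  (aa i s)⁻¹ * aa i j * aa i s = (aa i j * aa s j) * aa i j * (aa i j * aa s j)⁻¹
def b4s (j : ℕ) : Prop := ∀ r i s, 1 ≤ r → r < i → i < s → s < j →
  (aa r s)⁻¹ * aa i j * aa r s =
    (aa r j * aa s j * (aa r j)⁻¹ * (aa s j)⁻¹) * aa i j *
      (aa r j * aa s j * (aa r j)⁻¹ * (aa s j)⁻¹)⁻¹
def b5s (j : ℕ) : Prop := ∀ r s i, 1 ≤ r → r < s → s < j → 1 ≤ i → i < j → (s < i ∨ i < r) →
  (aa r s)⁻¹ * bb i j * aa r s = bb i j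
def b6s (j : ℕ) : Prop := ∀ r s, 1 ≤ r → r < s → s < j →
  (aa r s)⁻¹ * bb s j * aa r s = bb r j * bb s j * (bb r j)⁻¹
def b7s (j : ℕ) : Prop := ∀ i s, 1 ≤ i → i < s → s < j →
  (aa i s)⁻¹ * bb i j * aa i s = (bb i j * bb s j) * bb i j * (bb i j * bb s j)⁻¹
def b8s (j : ℕ) : Prop := ∀ r i s, 1 ≤ r → r < i → i < s → s < j →
  (aa r s)⁻¹ * bb i j * aa r s =
    (bb r j * bb s j * (bb r j)⁻¹ * (bb s j)⁻¹) * bb i j *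
      (bb r j * bb s j * (bb r j)⁻¹ * (bb s j)⁻¹)⁻¹

/-! ### B-families: master induction -/

lemma Bmaster : ∀ j, b1s j ∧ b2s j ∧ b3s j ∧ b4s j ∧ b5s j ∧ b6s j ∧ b7s j ∧ b8s j := by
  intro j
  induction j using Nat.strong_induction_on with
  | _ j IH =>
  have IHb1 : ∀ jj, jj < j → b1s jj := fun jj h => (IH jj h).1
  have IHb2 : ∀ jj, jj < j → b2s jj := fun jj h => (IH jj h).2.1
  have IHb3 : ∀ jj, jj < j → b3s jj := fun jj h => (IH jj h).2.2.1
  have IHb4 : ∀ jj, jj < j → b4s jj := fun jj h => (IH jj h).2.2.2.1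
  have IHb5 : ∀ jj, jj < j → b5s jj := fun jj h => (IH jj h).2.2.2.2.1
  have IHb6 : ∀ jj, jj < j → b6s jj := fun jj h => (IH jj h).2.2.2.2.2.1
  have IHb7 : ∀ jj, jj < j → b7s jj := fun jj h => (IH jj h).2.2.2.2.2.2.1
  have IHb8 : ∀ jj, jj < j → b8s jj := fun jj h => (IH jj h).2.2.2.2.2.2.2
  rcases le_or_gt j 12 with hN | hN
  · exact ⟨fun r s i h1 h2 h3 h4 h5 hr => baseB1 h1 h2 h3 h4 h5 hr hN,
      fun r s h1 h2 h3 => baseB2 h1 h2 h3 hN,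
      fun i s h1 h2 h3 => baseB3 h1 h2 h3 hN,
      fun r i s h1 h2 h3 h4 => baseB4 h1 h2 h3 h4 hN,
      fun r s i h1 h2 h3 h4 h5 hr => baseB5 h1 h2 h3 h4 h5 hr hN,
      fun r s h1 h2 h3 => baseB6 h1 h2 h3 hN,
      fun i s h1 h2 h3 => baseB7 h1 h2 h3 hN,
      fun r i s h1 h2 h3 h4 => baseB8 h1 h2 h3 h4 hN⟩
  · constructor
    · -- b1s
      intro r s i h1 h2 h3 h4 h5 hreg
      rcases hreg with hsi | hir
      · rcases le_or_gt (i+3) j with ht | ht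
        · have E' := congrArg (c i) (IHb1 (j-1) (by omega) r s i h1 h2 (by omega) h4
            (by omega) (Or.inl hsi))
          simp only [c_mul, c_inv] at E'
          rw [caD5 r s i h1 h2 (by omega),
            caD3 i (j-1) i j h4 le_rfl (by omega) (by omega)] at E'
          exact E'
        · rcases le_or_gt (s+3) i with hu | hu
          · have E' := congrArg (c s) (IHb1 (j-1) (by omega) r s (i-1) h1 h2 (by omega)
              (by omega) (by omega) (Or.inl (by omega)))
            simp only [c_mul, c_inv] at E'
            rw [caD5 r s s h1 h2 le_rfl,
              caD1 (i-1) (j-1) s i j (by omega) (by omega) (by omega) (by omega)] at E'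
            exact E'
          · rcases le_or_gt (r+3) s with hv | hv
            · have E' := congrArg (c r) (IHb1 (j-1) (by omega) r (s-1) (i-1) h1 (by omega)
                (by omega) (by omega) (by omega) (Or.inl (by omega)))
              simp only [c_mul, c_inv] at E'
              rw [caD3 r (s-1) r s h1 le_rfl (by omega) (by omega),
                caD1 (i-1) (j-1) r i j (by omega) (by omega) (by omega) (by omega)] at E'
              exact E'
            · rcases le_or_gt 3 r with hw | hw
              · have E' := congrArg (c 0) (IHb1 (j-1) (by omega) (r-1) (s-1) (i-1)
                  (by omega) (by omega) (by omega) (by omega) (by omega) (Or.inl (by omega)))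
                simp only [c_mul, c_inv] at E'
                rw [caD1 (r-1) (s-1) 0 r s (by omega) (by omega) (by omega) (by omega),
                  caD1 (i-1) (j-1) 0 i j (by omega) (by omega) (by omega) (by omega)] at E'
                exact E'
              · omega
      · rcases le_or_gt (s+3) j with ht | ht
        · have E' := congrArg (c s) (IHb1 (j-1) (by omega) r s i h1 h2 (by omega) h4
            (by omega) (Or.inr hir))
          simp only [c_mul, c_inv] at E'
          rw [caD5 r s s h1 h2 le_rfl,
            caD3 i (j-1) s j h4 (by omega) (by omega) (by omega)] at E'
          exact E'
        · rcases le_or_gt (r+3) s with hu | hu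
          · have E' := congrArg (c r) (IHb1 (j-1) (by omega) r (s-1) i h1 (by omega)
              (by omega) h4 (by omega) (Or.inr hir))
            simp only [c_mul, c_inv] at E'
            rw [caD3 r (s-1) r s h1 le_rfl (by omega) (by omega),
              caD3 i (j-1) r j h4 (by omega) (by omega) (by omega)] at E'
            exact E'
          · rcases le_or_gt (i+3) r with hv | hv
            · have E' := congrArg (c i) (IHb1 (j-1) (by omega) (r-1) (s-1) i (by omega)
                (by omega) (by omega) h4 (by omega) (Or.inr (by omega)))
              simp only [c_mul, c_inv] at E'
              rw [caD1 (r-1) (s-1) i r s (by omega) (by omega) (by omega) (by omega),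
                caD3 i (j-1) i j h4 le_rfl (by omega) (by omega)] at E'
              exact E'
            · rcases le_or_gt 3 i with hw | hw
              · have E' := congrArg (c 0) (IHb1 (j-1) (by omega) (r-1) (s-1) (i-1)
                  (by omega) (by omega) (by omega) (by omega) (by omega) (Or.inr (by omega)))
                simp only [c_mul, c_inv] at E'
                rw [caD1 (r-1) (s-1) 0 r s (by omega) (by omega) (by omega) (by omega),
                  caD1 (i-1) (j-1) 0 i j (by omega) (by omega) (by omega) (by omega)] at E'
                exact E'
              · omega
    constructor
    · -- b2s
      intro r s h1 h2 h3
      rcases le_or_gt (s+3) j with ht | ht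
      · have E' := congrArg (c s) (IHb2 (j-1) (by omega) r s h1 h2 (by omega))
        simp only [c_mul, c_inv] at E'
        rw [caD5 r s s h1 h2 le_rfl,
          caD3 s (j-1) s j (by omega) le_rfl (by omega) (by omega),
          caD3 r (j-1) s j h1 (by omega) (by omega) (by omega)] at E'
        exact E'
      · rcases le_or_gt (r+3) s with hu | hu
        · have E' := congrArg (c r) (IHb2 (j-1) (by omega) r (s-1) h1 (by omega) (by omega))
          simp only [c_mul, c_inv] at E'
          rw [caD3 r (s-1) r s h1 le_rfl (by omega) (by omega),
            caD1 (s-1) (j-1) r s j (by omega) (by omega) (by omega) (by omega),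
            caD3 r (j-1) r j h1 le_rfl (by omega) (by omega)] at E'
          exact E'
        · rcases le_or_gt 3 r with hv | hv
          · have E' := congrArg (c 0) (IHb2 (j-1) (by omega) (r-1) (s-1) (by omega)
              (by omega) (by omega))
            simp only [c_mul, c_inv] at E'
            rw [caD1 (r-1) (s-1) 0 r s (by omega) (by omega) (by omega) (by omega),
              caD1 (s-1) (j-1) 0 s j (by omega) (by omega) (by omega) (by omega),
              caD1 (r-1) (j-1) 0 r j (by omega) (by omega) (by omega) (by omega)] at E'
            exact E'
          · omega
    constructor
    · -- b3s
      intro i s h1 h2 h3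
      rcases le_or_gt (s+3) j with ht | ht
      · have E' := congrArg (c s) (IHb3 (j-1) (by omega) i s h1 h2 (by omega))
        simp only [c_mul, c_inv] at E'
        rw [caD5 i s s h1 h2 le_rfl,
          caD3 i (j-1) s j h1 (by omega) (by omega) (by omega),
          caD3 s (j-1) s j (by omega) le_rfl (by omega) (by omega)] at E'
        exact E'
      · rcases le_or_gt (i+3) s with hu | hu
        · have E' := congrArg (c i) (IHb3 (j-1) (by omega) i (s-1) h1 (by omega) (by omega))
          simp only [c_mul, c_inv] at E'
          rw [caD3 i (s-1) i s h1 le_rfl (by omega) (by omega),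
            caD3 i (j-1) i j h1 le_rfl (by omega) (by omega),
            caD1 (s-1) (j-1) i s j (by omega) (by omega) (by omega) (by omega)] at E'
          exact E'
        · rcases le_or_gt 3 i with hv | hv
          · have E' := congrArg (c 0) (IHb3 (j-1) (by omega) (i-1) (s-1) (by omega)
              (by omega) (by omega))
            simp only [c_mul, c_inv] at E'
            rw [caD1 (i-1) (s-1) 0 i s (by omega) (by omega) (by omega) (by omega),
              caD1 (i-1) (j-1) 0 i j (by omega) (by omega) (by omega) (by omega),
              caD1 (s-1) (j-1) 0 s j (by omega) (by omega) (by omega) (by omega)] at E'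
            exact E'
          · omega
    constructor
    · -- b4s
      intro r i s h1 h2 h3 h4
      rcases le_or_gt (s+3) j with ht | ht
      · have E' := congrArg (c s) (IHb4 (j-1) (by omega) r i s h1 h2 h3 (by omega))
        simp only [c_mul, c_inv] at E'
        rw [caD5 r s s h1 (by omega) le_rfl,
          caD3 i (j-1) s j (by omega) (by omega) (by omega) (by omega),
          caD3 r (j-1) s j h1 (by omega) (by omega) (by omega),
          caD3 s (j-1) s j (by omega) le_rfl (by omega) (by omega)] at E'
        exact E'
      · rcases le_or_gt (i+3) s with hu | hu
        · have E' := congrArg (c i) (IHb4 (j-1) (by omega) r i (s-1) h1 h2 (by omega)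
            (by omega))
          simp only [c_mul, c_inv] at E'
          rw [caD3 r (s-1) i s h1 (by omega) (by omega) (by omega),
            caD3 i (j-1) i j (by omega) le_rfl (by omega) (by omega),
            caD3 r (j-1) i j h1 (by omega) (by omega) (by omega),
            caD1 (s-1) (j-1) i s j (by omega) (by omega) (by omega) (by omega)] at E'
          exact E'
        · rcases le_or_gt (r+3) i with hv | hv
          · have E' := congrArg (c r) (IHb4 (j-1) (by omega) r (i-1) (s-1) h1 (by omega)
              (by omega) (by omega))
            simp only [c_mul, c_inv] at E'
            rw [caD3 r (s-1) r s h1 le_rfl (by omega) (by omega),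
              caD1 (i-1) (j-1) r i j (by omega) (by omega) (by omega) (by omega),
              caD3 r (j-1) r j h1 le_rfl (by omega) (by omega),
              caD1 (s-1) (j-1) r s j (by omega) (by omega) (by omega) (by omega)] at E'
            exact E'
          · rcases le_or_gt 3 r with hw | hw
            · have E' := congrArg (c 0) (IHb4 (j-1) (by omega) (r-1) (i-1) (s-1)
                (by omega) (by omega) (by omega) (by omega))
              simp only [c_mul, c_inv] at E'
              rw [caD1 (r-1) (s-1) 0 r s (by omega) (by omega) (by omega) (by omega),
                caD1 (i-1) (j-1) 0 i j (by omega) (by omega) (by omega) (by omega),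
                caD1 (r-1) (j-1) 0 r j (by omega) (by omega) (by omega) (by omega),
                caD1 (s-1) (j-1) 0 s j (by omega) (by omega) (by omega) (by omega)] at E'
              exact E'
            · omega
    constructor
    · -- b5s
      intro r s i h1 h2 h3 h4 h5 hreg
      rcases hreg with hsi | hir
      · rcases le_or_gt (i+3) j with ht | ht
        · have E' := congrArg (c i) (IHb5 (j-1) (by omega) r s i h1 h2 (by omega) h4
            (by omega) (Or.inl hsi))
          simp only [c_mul, c_inv] at E'
          rw [caD5 r s i h1 h2 (by omega),
            d8 (j := j-1) i i j h4 le_rfl (by omega) (by omega)] at E'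
          exact E'
        · rcases le_or_gt (s+3) i with hu | hu
          · have E' := congrArg (c s) (IHb5 (j-1) (by omega) r s (i-1) h1 h2 (by omega)
              (by omega) (by omega) (Or.inl (by omega)))
            simp only [c_mul, c_inv] at E'
            rw [caD5 r s s h1 h2 le_rfl,
              d6 (j := j-1) (i-1) s i j (by omega) (by omega) (by omega) (by omega)] at E'
            exact E'
          · rcases le_or_gt (r+3) s with hv | hv
            · have E' := congrArg (c r) (IHb5 (j-1) (by omega) r (s-1) (i-1) h1 (by omega)
                (by omega) (by omega) (by omega) (Or.inl (by omega)))
              simp only [c_mul, c_inv] at E'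
              rw [caD3 r (s-1) r s h1 le_rfl (by omega) (by omega),
                d6 (j := j-1) (i-1) r i j (by omega) (by omega) (by omega) (by omega)] at E'
              exact E'
            · rcases le_or_gt 3 r with hw | hw
              · have E' := congrArg (c 0) (IHb5 (j-1) (by omega) (r-1) (s-1) (i-1)
                  (by omega) (by omega) (by omega) (by omega) (by omega) (Or.inl (by omega)))
                simp only [c_mul, c_inv] at E'
                rw [caD1 (r-1) (s-1) 0 r s (by omega) (by omega) (by omega) (by omega),
                  d6 (j := j-1) (i-1) 0 i j (by omega) (by omega) (by omega) (by omega)] at E'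
                exact E'
              · omega
      · rcases le_or_gt (s+3) j with ht | ht
        · have E' := congrArg (c s) (IHb5 (j-1) (by omega) r s i h1 h2 (by omega) h4
            (by omega) (Or.inr hir))
          simp only [c_mul, c_inv] at E'
          rw [caD5 r s s h1 h2 le_rfl,
            d8 (j := j-1) i s j h4 (by omega) (by omega) (by omega)] at E'
          exact E'
        · rcases le_or_gt (r+3) s with hu | hu
          · have E' := congrArg (c r) (IHb5 (j-1) (by omega) r (s-1) i h1 (by omega)
              (by omega) h4 (by omega) (Or.inr hir))
            simp only [c_mul, c_inv] at E'
            rw [caD3 r (s-1) r s h1 le_rfl (by omega) (by omega),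
              d8 (j := j-1) i r j h4 (by omega) (by omega) (by omega)] at E'
            exact E'
          · rcases le_or_gt (i+3) r with hv | hv
            · have E' := congrArg (c i) (IHb5 (j-1) (by omega) (r-1) (s-1) i (by omega)
                (by omega) (by omega) h4 (by omega) (Or.inr (by omega)))
              simp only [c_mul, c_inv] at E'
              rw [caD1 (r-1) (s-1) i r s (by omega) (by omega) (by omega) (by omega),
                d8 (j := j-1) i i j h4 le_rfl (by omega) (by omega)] at E'
              exact E'
            · rcases le_or_gt 3 i with hw | hw
              · have E' := congrArg (c 0) (IHb5 (j-1) (by omega) (r-1) (s-1) (i-1)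
                  (by omega) (by omega) (by omega) (by omega) (by omega) (Or.inr (by omega)))
                simp only [c_mul, c_inv] at E'
                rw [caD1 (r-1) (s-1) 0 r s (by omega) (by omega) (by omega) (by omega),
                  d6 (j := j-1) (i-1) 0 i j (by omega) (by omega) (by omega) (by omega)] at E'
                exact E'
              · omega
    constructor
    · -- b6s
      intro r s h1 h2 h3
      rcases le_or_gt (s+3) j with ht | ht
      · have E' := congrArg (c s) (IHb6 (j-1) (by omega) r s h1 h2 (by omega))
        simp only [c_mul, c_inv] at E'
        rw [caD5 r s s h1 h2 le_rfl,
          d8 (j := j-1) s s j (by omega) le_rfl (by omega) (by omega),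
          d8 (j := j-1) r s j h1 (by omega) (by omega) (by omega)] at E'
        exact E'
      · rcases le_or_gt (r+3) s with hu | hu
        · have E' := congrArg (c r) (IHb6 (j-1) (by omega) r (s-1) h1 (by omega) (by omega))
          simp only [c_mul, c_inv] at E'
          rw [caD3 r (s-1) r s h1 le_rfl (by omega) (by omega),
            d6 (j := j-1) (s-1) r s j (by omega) (by omega) (by omega) (by omega),
            d8 (j := j-1) r r j h1 le_rfl (by omega) (by omega)] at E'
          exact E'
        · rcases le_or_gt 3 r with hv | hv
          · have E' := congrArg (c 0) (IHb6 (j-1) (by omega) (r-1) (s-1) (by omega)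
              (by omega) (by omega))
            simp only [c_mul, c_inv] at E'
            rw [caD1 (r-1) (s-1) 0 r s (by omega) (by omega) (by omega) (by omega),
              d6 (j := j-1) (s-1) 0 s j (by omega) (by omega) (by omega) (by omega),
              d6 (j := j-1) (r-1) 0 r j (by omega) (by omega) (by omega) (by omega)] at E'
            exact E'
          · omega
    constructor
    · -- b7s
      intro i s h1 h2 h3
      rcases le_or_gt (s+3) j with ht | ht
      · have E' := congrArg (c s) (IHb7 (j-1) (by omega) i s h1 h2 (by omega))
        simp only [c_mul, c_inv] at E'
        rw [caD5 i s s h1 h2 le_rfl,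
          d8 (j := j-1) i s j h1 (by omega) (by omega) (by omega),
          d8 (j := j-1) s s j (by omega) le_rfl (by omega) (by omega)] at E'
        exact E'
      · rcases le_or_gt (i+3) s with hu | hu
        · have E' := congrArg (c i) (IHb7 (j-1) (by omega) i (s-1) h1 (by omega) (by omega))
          simp only [c_mul, c_inv] at E'
          rw [caD3 i (s-1) i s h1 le_rfl (by omega) (by omega),
            d8 (j := j-1) i i j h1 le_rfl (by omega) (by omega),
            d6 (j := j-1) (s-1) i s j (by omega) (by omega) (by omega) (by omega)] at E'
          exact E'
        · rcases le_or_gt 3 i with hv | hv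
          · have E' := congrArg (c 0) (IHb7 (j-1) (by omega) (i-1) (s-1) (by omega)
              (by omega) (by omega))
            simp only [c_mul, c_inv] at E'
            rw [caD1 (i-1) (s-1) 0 i s (by omega) (by omega) (by omega) (by omega),
              d6 (j := j-1) (i-1) 0 i j (by omega) (by omega) (by omega) (by omega),
              d6 (j := j-1) (s-1) 0 s j (by omega) (by omega) (by omega) (by omega)] at E'
            exact E'
          · omega
    · -- b8s
      intro r i s h1 h2 h3 h4
      rcases le_or_gt (s+3) j with ht | ht
      · have E' := congrArg (c s) (IHb8 (j-1) (by omega) r i s h1 h2 h3 (by omega))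
        simp only [c_mul, c_inv] at E'
        rw [caD5 r s s h1 (by omega) le_rfl,
          d8 (j := j-1) i s j (by omega) (by omega) (by omega) (by omega),
          d8 (j := j-1) r s j h1 (by omega) (by omega) (by omega),
          d8 (j := j-1) s s j (by omega) le_rfl (by omega) (by omega)] at E'
        exact E'
      · rcases le_or_gt (i+3) s with hu | hu
        · have E' := congrArg (c i) (IHb8 (j-1) (by omega) r i (s-1) h1 h2 (by omega)
            (by omega))
          simp only [c_mul, c_inv] at E'
          rw [caD3 r (s-1) i s h1 (by omega) (by omega) (by omega),
            d8 (j := j-1) i i j (by omega) le_rfl (by omega) (by omega),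
            d8 (j := j-1) r i j h1 (by omega) (by omega) (by omega),
            d6 (j := j-1) (s-1) i s j (by omega) (by omega) (by omega) (by omega)] at E'
          exact E'
        · rcases le_or_gt (r+3) i with hv | hv
          · have E' := congrArg (c r) (IHb8 (j-1) (by omega) r (i-1) (s-1) h1 (by omega)
              (by omega) (by omega))
            simp only [c_mul, c_inv] at E'
            rw [caD3 r (s-1) r s h1 le_rfl (by omega) (by omega),
              d6 (j := j-1) (i-1) r i j (by omega) (by omega) (by omega) (by omega),
              d8 (j := j-1) r r j h1 le_rfl (by omega) (by omega),
              d6 (j := j-1) (s-1) r s j (by omega) (by omega) (by omega) (by omega)] at E'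
            exact E'
          · rcases le_or_gt 3 r with hw | hw
            · have E' := congrArg (c 0) (IHb8 (j-1) (by omega) (r-1) (i-1) (s-1)
                (by omega) (by omega) (by omega) (by omega))
              simp only [c_mul, c_inv] at E'
              rw [caD1 (r-1) (s-1) 0 r s (by omega) (by omega) (by omega) (by omega),
                d6 (j := j-1) (i-1) 0 i j (by omega) (by omega) (by omega) (by omega),
                d6 (j := j-1) (r-1) 0 r j (by omega) (by omega) (by omega) (by omega),
                d6 (j := j-1) (s-1) 0 s j (by omega) (by omega) (by omega) (by omega)] at E'
              exact E'
            · omega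

lemma tb1 {j : ℕ} : b1s j := (Bmaster j).1
lemma tb2 {j : ℕ} : b2s j := (Bmaster j).2.1
lemma tb3 {j : ℕ} : b3s j := (Bmaster j).2.2.1
lemma tb4 {j : ℕ} : b4s j := (Bmaster j).2.2.2.1
lemma tb5 {j : ℕ} : b5s j := (Bmaster j).2.2.2.2.1
lemma tb6 {j : ℕ} : b6s j := (Bmaster j).2.2.2.2.2.1
lemma tb7 {j : ℕ} : b7s j := (Bmaster j).2.2.2.2.2.2.1
lemma tb8 {j : ℕ} : b8s j := (Bmaster j).2.2.2.2.2.2.2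


lemma commtrick {G : Type*} [Group G] (X Y Z W : G) (hc : Y * (X⁻¹ * Z) = (X⁻¹ * Z) * Y) :
    (X*Y)⁻¹ * (Z*W) = (X⁻¹*Z) * (Y⁻¹*W) := by
  have e : Y⁻¹ * (X⁻¹ * Z) = (X⁻¹ * Z) * Y⁻¹ := by
    calc Y⁻¹ * (X⁻¹*Z) = Y⁻¹ * ((X⁻¹*Z) * Y) * Y⁻¹ := by group
    _ = Y⁻¹ * (Y * (X⁻¹*Z)) * Y⁻¹ := by rw [← hc]
    _ = (X⁻¹*Z) * Y⁻¹ := by group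
  calc (X*Y)⁻¹ * (Z*W) = Y⁻¹ * (X⁻¹ * Z) * W := by group
  _ = (X⁻¹*Z) * Y⁻¹ * W := by rw [e]
  _ = (X⁻¹*Z) * (Y⁻¹*W) := by group

lemma caD2 (i j k i' j' : ℕ) (h1 : 1 ≤ i) (h2 : i < j) (hk : k = i - 1) (hi' : i' = i + 1)
    (hj' : j' = j + 1) : c k (aa i j) = aa i' j' * aa i j' := by
  subst hk; subst hi'; subst hj'
  have hcomm := tb5 (j := j+2) (i+1) (j+1) i (by omega) (by omega) (by omega) (by omega)
    (by omega) (Or.inr (by omega))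
  have hc0 : bb i (j+2) * aa (i+1) (j+1) = aa (i+1) (j+1) * bb i (j+2) := by
    conv_rhs => rw [← hcomm]
    group
  rw [aa_eq (i+1) (j+1), show j+1+1 = j+2 by omega] at hc0
  rw [aa_eq i j, c_mul, c_inv,
    d7 (j := j+1) i (i-1) (i+1) (j+2) h1 (by omega) rfl rfl (by omega),
    d7 (j := j) i (i-1) (i+1) (j+1) h1 h2 rfl rfl rfl,
    aa_eq (i+1) (j+1), aa_eq i (j+1), show j+1+1 = j+2 by omega]
  exact commtrick _ _ _ _ hc0

/-! ### All defining relations of `BF`, in relator shape, valid in `H`. -/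

lemma rA {i j : ℕ} (h : i < j) : xx j * xx i = xx i * xx (j+1) := relA h rfl

lemma rB1 {r s i j : ℕ} (h1 : 1 ≤ r) (h2 : r < s)
    (hreg : (s < i ∧ i < j) ∨ (1 ≤ i ∧ i < r ∧ s < j)) :
    (aa r s)⁻¹ * aa i j * aa r s = aa i j := by
  rcases hreg with ⟨ha, hb⟩ | ⟨ha, hb, hc⟩
  · exact tb1 r s i h1 h2 (by omega) (by omega) hb (Or.inl ha)
  · exact tb1 r s i h1 h2 hc ha (by omega) (Or.inr hb)

lemma rB2 {r s j : ℕ} (h1 : 1 ≤ r) (h2 : r < s) (h3 : s < j) :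
    (aa r s)⁻¹ * aa s j * aa r s = aa r j * aa s j * (aa r j)⁻¹ := tb2 r s h1 h2 h3

lemma rB3 {i s j : ℕ} (h1 : 1 ≤ i) (h2 : i < s) (h3 : s < j) :
    (aa i s)⁻¹ * aa i j * aa i s = (aa i j * aa s j) * aa i j * (aa i j * aa s j)⁻¹ :=
  tb3 i s h1 h2 h3

lemma rB4 {r i s j : ℕ} (h1 : 1 ≤ r) (h2 : r < i) (h3 : i < s) (h4 : s < j) :
    (aa r s)⁻¹ * aa i j * aa r s =
      (aa r j * aa s j * (aa r j)⁻¹ * (aa s j)⁻¹) * aa i j *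
        (aa r j * aa s j * (aa r j)⁻¹ * (aa s j)⁻¹)⁻¹ := tb4 r i s h1 h2 h3 h4

lemma rB5 {r s i j : ℕ} (h1 : 1 ≤ r) (h2 : r < s)
    (hreg : (s < i ∧ i < j) ∨ (1 ≤ i ∧ i < r ∧ s < j)) :
    (aa r s)⁻¹ * bb i j * aa r s = bb i j := by
  rcases hreg with ⟨ha, hb⟩ | ⟨ha, hb, hc⟩
  · exact tb5 r s i h1 h2 (by omega) (by omega) hb (Or.inl ha)
  · exact tb5 r s i h1 h2 hc ha (by omega) (Or.inr hb)

lemma rB6 {r s j : ℕ} (h1 : 1 ≤ r) (h2 : r < s) (h3 : s < j) :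
    (aa r s)⁻¹ * bb s j * aa r s = bb r j * bb s j * (bb r j)⁻¹ := tb6 r s h1 h2 h3

lemma rB7 {i s j : ℕ} (h1 : 1 ≤ i) (h2 : i < s) (h3 : s < j) :
    (aa i s)⁻¹ * bb i j * aa i s = (bb i j * bb s j) * bb i j * (bb i j * bb s j)⁻¹ :=
  tb7 i s h1 h2 h3

lemma rB8 {r i s j : ℕ} (h1 : 1 ≤ r) (h2 : r < i) (h3 : i < s) (h4 : s < j) :
    (aa r s)⁻¹ * bb i j * aa r s =
      (bb r j * bb s j * (bb r j)⁻¹ * (bb s j)⁻¹) * bb i j *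
        (bb r j * bb s j * (bb r j)⁻¹ * (bb s j)⁻¹)⁻¹ := tb8 r i s h1 h2 h3 h4

lemma rC {i j : ℕ} : bb i j = bb i (j+1) * aa i j := by rw [aa_eq]; group

lemma rD1 {i j k : ℕ} (h1 : 1 ≤ i) (h2 : i < j) (h3 : k + 1 < i) :
    aa i j * xx k = xx k * aa (i+1) (j+1) :=
  swap_of_conj (caD1 i j k (i+1) (j+1) h3 h2 rfl rfl)

lemma rD2 {i j : ℕ} (h1 : 1 ≤ i) (h2 : i < j) :
    aa i j * xx (i-1) = xx (i-1) * aa (i+1) (j+1) * aa i (j+1) := by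
  have := swap_of_conj (caD2 i j (i-1) (i+1) (j+1) h1 h2 rfl rfl rfl)
  rw [← mul_assoc] at this
  exact this

lemma rD3 {i j k : ℕ} (h1 : 1 ≤ i) (h2 : i < j) (h3 : i ≤ k) (h4 : k + 1 < j) :
    aa i j * xx k = xx k * aa i (j+1) :=
  swap_of_conj (caD3 i j k (j+1) h1 h3 h4 rfl)

lemma rD4 {i j : ℕ} (h1 : 1 ≤ i) (h2 : i < j) :
    aa i j * xx (j-1) = xx (j-1) * aa i (j+1) * aa i j := by
  have := swap_of_conj (caD4 i j (j-1) (j+1) h1 h2 rfl rfl)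
  rw [← mul_assoc] at this
  exact this

lemma rD5 {i j k : ℕ} (h1 : 1 ≤ i) (h2 : i < j) (h3 : j ≤ k) :
    aa i j * xx k = xx k * aa i j :=
  swap_of_conj (caD5 i j k h1 h2 h3)

lemma rD6 {i j k : ℕ} (h1 : 1 ≤ i) (h2 : i < j) (h3 : k + 1 < i) :
    bb i j * xx k = xx k * bb (i+1) (j+1) :=
  swap_of_conj (d6 (j := j) i k (i+1) (j+1) h3 h2 rfl rfl)

lemma rD7 {i j : ℕ} (h1 : 1 ≤ i) (h2 : i < j) :
    bb i j * xx (i-1) = xx (i-1) * bb (i+1) (j+1) * bb i (j+1) := by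
  have := swap_of_conj (d7 (j := j) i (i-1) (i+1) (j+1) h1 h2 rfl rfl rfl)
  rw [← mul_assoc] at this
  exact this

lemma rD8 {i j k : ℕ} (h1 : 1 ≤ i) (h2 : i < j) (h3 : i ≤ k) (h4 : k + 1 < j) :
    bb i j * xx k = xx k * bb i (j+1) :=
  swap_of_conj (d8 (j := j) i k (j+1) h1 h3 h4 rfl)

lemma rD9 {i j k : ℕ} (h1 : 1 ≤ i) (h2 : i < j) (h3 : j ≤ k + 1) :
    bb i j * xx k = xx k * bb i j :=
  swap_of_conj (d9 (j := j) i k h1 h2 h3)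


/-! ### the homomorphism `GBF → H` -/

def fp : BFGen → H
  | .x n => xx n
  | .a p q => hmk (Aph p q)
  | .b p q => hmk (Bph p q)

lemma lf_X (n : ℕ) : FreeGroup.lift fp (BFGen.X n) = xx n := by
  simp only [BFGen.X, FreeGroup.lift_apply_of, fp]

lemma lf_B (i j : ℕ) : FreeGroup.lift fp (BFGen.B i j) = bb i j := by
  simp only [BFGen.B, FreeGroup.lift_apply_of, fp]; rfl

lemma lf_A {i j : ℕ} (h2 : i < j) : FreeGroup.lift fp (BFGen.A i j) = aa i j := by
  simp only [BFGen.A, FreeGroup.lift_apply_of, fp]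
  show hmk (Aph (i-1) (j-i-1)) = hmk (Ah i j)
  congr 1
  unfold Aph Ah Bh
  rw [show (j+1) - i - 1 = (j-i-1)+1 by omega]

lemma psi_rels : ∀ r ∈ BFGen.bfRels, FreeGroup.lift fp r = 1 := by
  intro g hg
  rcases hg with ⟨i,j,hij,rfl⟩ | ⟨r,s,i,j,h1,h2,hreg,rfl⟩ | ⟨r,s,j,h1,h2,h3,rfl⟩ |
    ⟨i,s,j,h1,h2,h3,rfl⟩ | ⟨r,i,s,j,h1,h2,h3,h4,rfl⟩ | ⟨r,s,i,j,h1,h2,hreg,rfl⟩ |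
    ⟨r,s,j,h1,h2,h3,rfl⟩ | ⟨i,s,j,h1,h2,h3,rfl⟩ | ⟨r,i,s,j,h1,h2,h3,h4,rfl⟩ |
    ⟨i,j,h1,h2,rfl⟩ | ⟨i,j,k,h1,h2,h3,rfl⟩ | ⟨i,j,h1,h2,rfl⟩ | ⟨i,j,k,h1,h2,h3,h4,rfl⟩ |
    ⟨i,j,h1,h2,rfl⟩ | ⟨i,j,k,h1,h2,h3,rfl⟩ | ⟨i,j,k,h1,h2,h3,rfl⟩ | ⟨i,j,h1,h2,rfl⟩ |
    ⟨i,j,k,h1,h2,h3,h4,rfl⟩ | ⟨i,j,k,h1,h2,h3,rfl⟩ <;>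
  simp only [grel, map_mul, map_inv, mul_inv_eq_one, lf_X, lf_B]
  · exact rA hij
  · rw [lf_A h2, lf_A (show i < j by rcases hreg with ⟨a,b⟩|⟨a,b,c⟩ <;> omega)]
    exact rB1 h1 h2 hreg
  · rw [lf_A h2, lf_A (show s < j by omega), lf_A (show r < j by omega)]
    exact rB2 h1 h2 h3
  · rw [lf_A h2, lf_A (show i < j by omega), lf_A (show s < j by omega)]
    exact rB3 h1 h2 h3
  · rw [lf_A (show r < s by omega), lf_A (show i < j by omega), lf_A (show r < j by omega),
      lf_A (show s < j by omega)]
    exact rB4 h1 h2 h3 h4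
  · rw [lf_A h2]
    exact rB5 h1 h2 hreg
  · rw [lf_A h2]
    exact rB6 h1 h2 h3
  · rw [lf_A h2]
    exact rB7 h1 h2 h3
  · rw [lf_A (show r < s by omega)]
    exact rB8 h1 h2 h3 h4
  · rw [lf_A h2]
    exact rC
  · rw [lf_A h2, lf_A (show i+1 < j+1 by omega)]
    exact rD1 h1 h2 h3
  · rw [lf_A h2, lf_A (show i+1 < j+1 by omega), lf_A (show i < j+1 by omega)]
    exact rD2 h1 h2
  · rw [lf_A h2, lf_A (show i < j+1 by omega)]
    exact rD3 h1 h2 h3 h4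
  · rw [lf_A h2, lf_A (show i < j+1 by omega)]
    exact rD4 h1 h2
  · rw [lf_A h2]
    exact rD5 h1 h2 h3
  · exact rD6 h1 h2 h3
  · exact rD7 h1 h2
  · exact rD8 h1 h2 h3 h4
  · exact rD9 h1 h2 h3

/-- The homomorphism `GBF →* H`. -/
def Psi : GBF →* H := PresentedGroup.toGroup psi_rels

end BFF

namespace BFF
open GBF

/-- mk for `GBF`. -/
def gmk' : FreeGroup BFGen →* GBF := PresentedGroup.mk _

lemma g_rel {u v : FreeGroup BFGen} (h : grel u v ∈ BFGen.bfRels) : gmk' u = gmk' v := by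
  have h1 : gmk' (grel u v) = 1 :=
    (QuotientGroup.eq_one_iff _).2 (Subgroup.subset_normalClosure h)
  rw [grel, map_mul, map_inv, mul_inv_eq_one] at h1
  exact h1

lemma gconj {x u v : GBF} (h : u * x = x * v) : x⁻¹ * u * x = v := by
  rw [mul_assoc, h, ← mul_assoc, inv_mul_cancel, one_mul]

lemma bg_congr {i i' j j' : ℕ} (hi : i = i') (hj : j = j') : bg i j = bg i' j' := by
  subst hi; subst hj; rfl

lemma gA {i j j' : ℕ} (hij : i < j) (h' : j' = j + 1) : xg j * xg i = xg i * xg j' := by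
  subst h'
  have h := g_rel (Or.inl ⟨i, j, hij, rfl⟩)
  rw [map_mul, map_mul] at h
  exact h

lemma gB1 {r s i j : ℕ} (h1 : 1 ≤ r) (h2 : r < s)
    (hreg : (s < i ∧ i < j) ∨ (1 ≤ i ∧ i < r ∧ s < j)) :
    (ag r s)⁻¹ * ag i j * ag r s = ag i j := by
  have h := g_rel (Or.inr (Or.inl (⟨r, s, i, j, h1, h2, hreg, rfl⟩)))
  simp only [map_mul, map_inv] at h
  exact h

lemma gB2 {r s j : ℕ} (h1 : 1 ≤ r) (h2 : r < s) (h3 : s < j) :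
    (ag r s)⁻¹ * ag s j * ag r s = ag r j * ag s j * (ag r j)⁻¹ := by
  have h := g_rel (Or.inr (Or.inr (Or.inl (⟨r, s, j, h1, h2, h3, rfl⟩))))
  simp only [map_mul, map_inv] at h
  exact h

lemma gB3 {i s j : ℕ} (h1 : 1 ≤ i) (h2 : i < s) (h3 : s < j) :
    (ag i s)⁻¹ * ag i j * ag i s = (ag i j * ag s j) * ag i j * (ag i j * ag s j)⁻¹ := by
  have h := g_rel (Or.inr (Or.inr (Or.inr (Or.inl (⟨i, s, j, h1, h2, h3, rfl⟩)))))
  simp only [map_mul, map_inv] at h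
  exact h

lemma gB4 {r i s j : ℕ} (h1 : 1 ≤ r) (h2 : r < i) (h3 : i < s) (h4 : s < j) :
    (ag r s)⁻¹ * ag i j * ag r s =
      (ag r j * ag s j * (ag r j)⁻¹ * (ag s j)⁻¹) * ag i j *
        (ag r j * ag s j * (ag r j)⁻¹ * (ag s j)⁻¹)⁻¹ := by
  have h := g_rel (Or.inr (Or.inr (Or.inr (Or.inr (Or.inl (⟨r, i, s, j, h1, h2, h3, h4, rfl⟩))))))
  simp only [map_mul, map_inv] at h
  exact h

lemma gB5 {r s i j : ℕ} (h1 : 1 ≤ r) (h2 : r < s)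
    (hreg : (s < i ∧ i < j) ∨ (1 ≤ i ∧ i < r ∧ s < j)) :
    (ag r s)⁻¹ * bg i j * ag r s = bg i j := by
  have h := g_rel (Or.inr (Or.inr (Or.inr (Or.inr (Or.inr (Or.inl (⟨r, s, i, j, h1, h2, hreg, rfl⟩)))))))
  simp only [map_mul, map_inv] at h
  exact h

lemma gB6 {r s j : ℕ} (h1 : 1 ≤ r) (h2 : r < s) (h3 : s < j) :
    (ag r s)⁻¹ * bg s j * ag r s = bg r j * bg s j * (bg r j)⁻¹ := by
  have h := g_rel (Or.inr (Or.inr (Or.inr (Or.inr (Or.inr (Or.inr (Or.inl (⟨r, s, j, h1, h2, h3, rfl⟩))))))))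
  simp only [map_mul, map_inv] at h
  exact h

lemma gB7 {i s j : ℕ} (h1 : 1 ≤ i) (h2 : i < s) (h3 : s < j) :
    (ag i s)⁻¹ * bg i j * ag i s = (bg i j * bg s j) * bg i j * (bg i j * bg s j)⁻¹ := by
  have h := g_rel (Or.inr (Or.inr (Or.inr (Or.inr (Or.inr (Or.inr (Or.inr (Or.inl (⟨i, s, j, h1, h2, h3, rfl⟩)))))))))
  simp only [map_mul, map_inv] at h
  exact h

lemma gB8 {r i s j : ℕ} (h1 : 1 ≤ r) (h2 : r < i) (h3 : i < s) (h4 : s < j) :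
    (ag r s)⁻¹ * bg i j * ag r s =
      (bg r j * bg s j * (bg r j)⁻¹ * (bg s j)⁻¹) * bg i j *
        (bg r j * bg s j * (bg r j)⁻¹ * (bg s j)⁻¹)⁻¹ := by
  have h := g_rel (Or.inr (Or.inr (Or.inr (Or.inr (Or.inr (Or.inr (Or.inr (Or.inr (Or.inl (⟨r, i, s, j, h1, h2, h3, h4, rfl⟩))))))))))
  simp only [map_mul, map_inv] at h
  exact h

lemma gC {i j : ℕ} (h1 : 1 ≤ i) (h2 : i < j) : bg i j = bg i (j+1) * ag i j := by
  have h := g_rel (Or.inr (Or.inr (Or.inr (Or.inr (Or.inr (Or.inr (Or.inr (Or.inr (Or.inr (Or.inl (⟨i, j, h1, h2, rfl⟩)))))))))))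
  simp only [map_mul, map_inv] at h
  exact h

lemma gD1 {i j k : ℕ} (h1 : 1 ≤ i) (h2 : i < j) (h3 : k + 1 < i) :
    ag i j * xg k = xg k * ag (i+1) (j+1) := by
  have h := g_rel (Or.inr (Or.inr (Or.inr (Or.inr (Or.inr (Or.inr (Or.inr (Or.inr (Or.inr (Or.inr (Or.inl (⟨i, j, k, h1, h2, h3, rfl⟩))))))))))))
  simp only [map_mul, map_inv] at h
  exact h

lemma gD2 {i j : ℕ} (h1 : 1 ≤ i) (h2 : i < j) :
    ag i j * xg (i-1) = xg (i-1) * ag (i+1) (j+1) * ag i (j+1) := by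
  have h := g_rel (Or.inr (Or.inr (Or.inr (Or.inr (Or.inr (Or.inr (Or.inr (Or.inr (Or.inr (Or.inr (Or.inr (Or.inl (⟨i, j, h1, h2, rfl⟩)))))))))))))
  simp only [map_mul, map_inv] at h
  exact h

lemma gD3 {i j k : ℕ} (h1 : 1 ≤ i) (h2 : i < j) (h3 : i ≤ k) (h4 : k + 1 < j) :
    ag i j * xg k = xg k * ag i (j+1) := by
  have h := g_rel (Or.inr (Or.inr (Or.inr (Or.inr (Or.inr (Or.inr (Or.inr (Or.inr (Or.inr (Or.inr (Or.inr (Or.inr (Or.inl (⟨i, j, k, h1, h2, h3, h4, rfl⟩))))))))))))))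
  simp only [map_mul, map_inv] at h
  exact h

lemma gD4 {i j : ℕ} (h1 : 1 ≤ i) (h2 : i < j) :
    ag i j * xg (j-1) = xg (j-1) * ag i (j+1) * ag i j := by
  have h := g_rel (Or.inr (Or.inr (Or.inr (Or.inr (Or.inr (Or.inr (Or.inr (Or.inr (Or.inr (Or.inr (Or.inr (Or.inr (Or.inr (Or.inl (⟨i, j, h1, h2, rfl⟩)))))))))))))))
  simp only [map_mul, map_inv] at h
  exact h

lemma gD5 {i j k : ℕ} (h1 : 1 ≤ i) (h2 : i < j) (h3 : j ≤ k) :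
    ag i j * xg k = xg k * ag i j := by
  have h := g_rel (Or.inr (Or.inr (Or.inr (Or.inr (Or.inr (Or.inr (Or.inr (Or.inr (Or.inr (Or.inr (Or.inr (Or.inr (Or.inr (Or.inr (Or.inl (⟨i, j, k, h1, h2, h3, rfl⟩))))))))))))))))
  simp only [map_mul, map_inv] at h
  exact h

lemma gD6 {i j k i' j' : ℕ} (h1 : 1 ≤ i) (h2 : i < j) (h3 : k + 1 < i) (hi' : i' = i + 1)
    (hj' : j' = j + 1) : bg i j * xg k = xg k * bg i' j' := by
  subst hi'; subst hj'
  have h := g_rel (Or.inr (Or.inr (Or.inr (Or.inr (Or.inr (Or.inr (Or.inr (Or.inr (Or.inr (Or.inr (Or.inr (Or.inr (Or.inr (Or.inr (Or.inr (Or.inl (⟨i, j, k, h1, h2, h3, rfl⟩)))))))))))))))))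
  simp only [map_mul, map_inv] at h
  exact h

lemma gD7 {i j : ℕ} (h1 : 1 ≤ i) (h2 : i < j) :
    bg i j * xg (i-1) = xg (i-1) * bg (i+1) (j+1) * bg i (j+1) := by
  have h := g_rel (Or.inr (Or.inr (Or.inr (Or.inr (Or.inr (Or.inr (Or.inr (Or.inr (Or.inr (Or.inr (Or.inr (Or.inr (Or.inr (Or.inr (Or.inr (Or.inr (Or.inl (⟨i, j, h1, h2, rfl⟩))))))))))))))))))
  simp only [map_mul, map_inv] at h
  exact h

lemma gD8 {i j k j' : ℕ} (h1 : 1 ≤ i) (h2 : i < j) (h3 : i ≤ k) (h4 : k + 1 < j)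
    (hj' : j' = j + 1) : bg i j * xg k = xg k * bg i j' := by
  subst hj'
  have h := g_rel (Or.inr (Or.inr (Or.inr (Or.inr (Or.inr (Or.inr (Or.inr (Or.inr (Or.inr (Or.inr (Or.inr (Or.inr (Or.inr (Or.inr (Or.inr (Or.inr (Or.inr (Or.inl (⟨i, j, k, h1, h2, h3, h4, rfl⟩)))))))))))))))))))
  simp only [map_mul, map_inv] at h
  exact h

lemma gD9 {i j k : ℕ} (h1 : 1 ≤ i) (h2 : i < j) (h3 : j ≤ k + 1) :
    bg i j * xg k = xg k * bg i j := by
  have h := g_rel (Or.inr (Or.inr (Or.inr (Or.inr (Or.inr (Or.inr (Or.inr (Or.inr (Or.inr (Or.inr (Or.inr (Or.inr (Or.inr (Or.inr (Or.inr (Or.inr (Or.inr (Or.inr (⟨i, j, k, h1, h2, h3, rfl⟩)))))))))))))))))))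
  simp only [map_mul, map_inv] at h
  exact h

end BFF

namespace BFF
open GBF

/-! ### the homomorphism `H → GBF` -/

def fq : V → GBF
  | 0 => GBF.xg 0
  | 1 => GBF.xg 1
  | 2 => GBF.bg 1 2
  | 3 => GBF.bg 1 3
  | 4 => GBF.bg 2 3
  | 5 => GBF.bg 2 4

lemma gq_Xh : ∀ n, FreeGroup.lift fq (Xh n) = xg n := by
  intro n
  induction n using Nat.strong_induction_on with
  | _ n IH =>
  match n with
  | 0 => rw [show Xh 0 = FreeGroup.of 0 from rfl, FreeGroup.lift_apply_of]; rfl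
  | 1 => rw [show Xh 1 = FreeGroup.of 1 from rfl, FreeGroup.lift_apply_of]; rfl
  | (m+2) =>
    rw [show Xh (m+2) = (FreeGroup.of 0)⁻¹ * Xh (m+1) * FreeGroup.of 0 from rfl,
      map_mul, map_mul, map_inv, FreeGroup.lift_apply_of, IH (m+1) (by omega)]
    exact gconj (gA (i := 0) (j := m+1) (by omega) (by omega))

lemma gq_Bph0 : ∀ q, FreeGroup.lift fq (Bph 0 q) = bg 1 (q+2) := by
  intro q
  induction q using Nat.strong_induction_on with
  | _ q IH =>
  match q with
  | 0 => rw [show Bph 0 0 = FreeGroup.of 2 from rfl, FreeGroup.lift_apply_of]; rfl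
  | 1 => rw [show Bph 0 1 = FreeGroup.of 3 from rfl, FreeGroup.lift_apply_of]; rfl
  | (m+2) =>
    rw [show Bph 0 (m+2) = (FreeGroup.of 1)⁻¹ * Bph 0 (m+1) * FreeGroup.of 1 from rfl,
      map_mul, map_mul, map_inv, FreeGroup.lift_apply_of, IH (m+1) (by omega)]
    exact gconj (gD8 (by omega) (by omega) (by omega) (by omega) (by omega))

lemma gq_Bph1 : ∀ q, FreeGroup.lift fq (Bph 1 q) = bg 2 (q+3) := by
  intro q
  induction q using Nat.strong_induction_on with
  | _ q IH =>
  match q with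
  | 0 => rw [show Bph 1 0 = FreeGroup.of 4 from rfl, FreeGroup.lift_apply_of]; rfl
  | 1 => rw [show Bph 1 1 = FreeGroup.of 5 from rfl, FreeGroup.lift_apply_of]; rfl
  | (m+2) =>
    have hw : FreeGroup.lift fq ((FreeGroup.of 0)⁻¹ * FreeGroup.of 1 * FreeGroup.of 0)
        = xg 2 := by
      rw [map_mul, map_mul, map_inv, FreeGroup.lift_apply_of, FreeGroup.lift_apply_of]
      exact gconj (gA (i := 0) (j := 1) (by omega) (by omega))
    rw [show Bph 1 (m+2) = ((FreeGroup.of 0)⁻¹ * FreeGroup.of 1 * FreeGroup.of 0)⁻¹ *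
        Bph 1 (m+1) * ((FreeGroup.of 0)⁻¹ * FreeGroup.of 1 * FreeGroup.of 0) from rfl,
      map_mul, map_mul, map_inv, hw, IH (m+1) (by omega)]
    exact gconj (gD8 (by omega) (by omega) (by omega) (by omega) (by omega))

lemma gq_Bph : ∀ p q, FreeGroup.lift fq (Bph p q) = bg (p+1) (p+q+2) := by
  intro p
  induction p using Nat.strong_induction_on with
  | _ p IH =>
  intro q
  match p with
  | 0 => exact (gq_Bph0 q).trans (bg_congr (by omega) (by omega))
  | 1 => exact (gq_Bph1 q).trans (bg_congr (by omega) (by omega))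
  | (p+2) =>
    rw [show Bph (p+2) q = (FreeGroup.of 0)⁻¹ * Bph (p+1) q * FreeGroup.of 0 from rfl,
      map_mul, map_mul, map_inv, FreeGroup.lift_apply_of, IH (p+1) (by omega) q]
    exact gconj (gD6 (by omega) (by omega) (by omega) (by omega) (by omega))

lemma gq_Bh {i j : ℕ} (h1 : 1 ≤ i) (h2 : i < j) : FreeGroup.lift fq (Bh i j) = bg i j := by
  have h := gq_Bph (i-1) (j-i-1)
  rw [bg_congr (i := i-1+1) (i' := i) (j := (i-1)+(j-i-1)+2) (j' := j)
    (by omega) (by omega)] at h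
  exact h

lemma gq_Ah {i j : ℕ} (h1 : 1 ≤ i) (h2 : i < j) : FreeGroup.lift fq (Ah i j) = ag i j := by
  rw [show Ah i j = (Bh i (j+1))⁻¹ * Bh i j from rfl, map_mul, map_inv,
    gq_Bh h1 (by omega), gq_Bh h1 h2, gC h1 h2]
  group

end BFF

namespace BFF
open GBF

lemma phi_rels : ∀ r ∈ S, FreeGroup.lift fq r = 1 := by
  rintro r ⟨⟨⟨fv, hfv⟩, p1, p2, p3, p4⟩, rfl⟩
  show FreeGroup.lift fq (relOf fv p1 p2 p3 p4) = 1
  interval_cases fv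
  · simp only [relOf]
    split_ifs with h
    · simp only [grel, map_mul, map_inv, mul_inv_eq_one, gq_Xh]
      exact gA h rfl
    · exact map_one _
  · simp only [relOf]
    split_ifs with h
    · obtain ⟨ha, hb, hc⟩ := h
      simp only [grel, map_mul, map_inv, mul_inv_eq_one]
      rw [gq_Ah ha hb,
        gq_Ah (show 1 ≤ (p3:ℕ) by rcases hc with ⟨u,v⟩|⟨u,v,w⟩ <;> omega)
          (show (p3:ℕ) < (p4:ℕ) by rcases hc with ⟨u,v⟩|⟨u,v,w⟩ <;> omega)]
      exact gB1 ha hb hc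
    · exact map_one _
  · simp only [relOf]
    split_ifs with h
    · obtain ⟨ha, hb, hc⟩ := h
      simp only [grel, map_mul, map_inv, mul_inv_eq_one]
      rw [gq_Ah ha hb, gq_Ah (show 1 ≤ (p2:ℕ) by omega) hc,
        gq_Ah ha (show (p1:ℕ) < (p3:ℕ) by omega)]
      exact gB2 ha hb hc
    · exact map_one _
  · simp only [relOf]
    split_ifs with h
    · obtain ⟨ha, hb, hc⟩ := h
      simp only [grel, map_mul, map_inv, mul_inv_eq_one]
      rw [gq_Ah ha hb, gq_Ah ha (show (p1:ℕ) < (p3:ℕ) by omega),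
        gq_Ah (show 1 ≤ (p2:ℕ) by omega) hc]
      exact gB3 ha hb hc
    · exact map_one _
  · simp only [relOf]
    split_ifs with h
    · obtain ⟨ha, hb, hc, hd⟩ := h
      simp only [grel, map_mul, map_inv, mul_inv_eq_one]
      rw [gq_Ah ha (show (p1:ℕ) < (p3:ℕ) by omega),
        gq_Ah (show 1 ≤ (p2:ℕ) by omega) (show (p2:ℕ) < (p4:ℕ) by omega),
        gq_Ah ha (show (p1:ℕ) < (p4:ℕ) by omega),
        gq_Ah (show 1 ≤ (p3:ℕ) by omega) hd]
      exact gB4 ha hb hc hd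
    · exact map_one _
  · simp only [relOf]
    split_ifs with h
    · obtain ⟨ha, hb, hc⟩ := h
      simp only [grel, map_mul, map_inv, mul_inv_eq_one]
      rw [gq_Ah ha hb,
        gq_Bh (show 1 ≤ (p3:ℕ) by rcases hc with ⟨u,v⟩|⟨u,v,w⟩ <;> omega)
          (show (p3:ℕ) < (p4:ℕ) by rcases hc with ⟨u,v⟩|⟨u,v,w⟩ <;> omega)]
      exact gB5 ha hb hc
    · exact map_one _
  · simp only [relOf]
    split_ifs with h
    · obtain ⟨ha, hb, hc⟩ := h
      simp only [grel, map_mul, map_inv, mul_inv_eq_one]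
      rw [gq_Ah ha hb, gq_Bh (show 1 ≤ (p2:ℕ) by omega) hc,
        gq_Bh ha (show (p1:ℕ) < (p3:ℕ) by omega)]
      exact gB6 ha hb hc
    · exact map_one _
  · simp only [relOf]
    split_ifs with h
    · obtain ⟨ha, hb, hc⟩ := h
      simp only [grel, map_mul, map_inv, mul_inv_eq_one]
      rw [gq_Ah ha hb, gq_Bh ha (show (p1:ℕ) < (p3:ℕ) by omega),
        gq_Bh (show 1 ≤ (p2:ℕ) by omega) hc]
      exact gB7 ha hb hc
    · exact map_one _
  · simp only [relOf]
    split_ifs with h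
    · obtain ⟨ha, hb, hc, hd⟩ := h
      simp only [grel, map_mul, map_inv, mul_inv_eq_one]
      rw [gq_Ah ha (show (p1:ℕ) < (p3:ℕ) by omega),
        gq_Bh (show 1 ≤ (p2:ℕ) by omega) (show (p2:ℕ) < (p4:ℕ) by omega),
        gq_Bh ha (show (p1:ℕ) < (p4:ℕ) by omega),
        gq_Bh (show 1 ≤ (p3:ℕ) by omega) hd]
      exact gB8 ha hb hc hd
    · exact map_one _
  · simp only [relOf]
    split_ifs with h
    · obtain ⟨ha, hb⟩ := h
      simp only [grel, map_mul, map_inv, mul_inv_eq_one]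
      rw [gq_Bh ha hb, gq_Bh ha (show (p1:ℕ) < (p2:ℕ)+1 by omega), gq_Ah ha hb]
      exact gC ha hb
    · exact map_one _
  · simp only [relOf]
    split_ifs with h
    · obtain ⟨ha, hb, hc⟩ := h
      simp only [grel, map_mul, map_inv, mul_inv_eq_one, gq_Xh]
      rw [gq_Ah ha hb, gq_Ah (show 1 ≤ (p1:ℕ)+1 by omega) (show (p1:ℕ)+1 < (p2:ℕ)+1 by omega)]
      exact gD1 ha hb hc
    · exact map_one _
  · simp only [relOf]
    split_ifs with h
    · obtain ⟨ha, hb⟩ := h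
      simp only [grel, map_mul, map_inv, mul_inv_eq_one, gq_Xh]
      rw [gq_Ah ha hb, gq_Ah (show 1 ≤ (p1:ℕ)+1 by omega) (show (p1:ℕ)+1 < (p2:ℕ)+1 by omega),
        gq_Ah ha (show (p1:ℕ) < (p2:ℕ)+1 by omega)]
      exact gD2 ha hb
    · exact map_one _
  · simp only [relOf]
    split_ifs with h
    · obtain ⟨ha, hb, hc, hd⟩ := h
      simp only [grel, map_mul, map_inv, mul_inv_eq_one, gq_Xh]
      rw [gq_Ah ha hb, gq_Ah ha (show (p1:ℕ) < (p2:ℕ)+1 by omega)]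
      exact gD3 ha hb hc hd
    · exact map_one _
  · simp only [relOf]
    split_ifs with h
    · obtain ⟨ha, hb⟩ := h
      simp only [grel, map_mul, map_inv, mul_inv_eq_one, gq_Xh]
      rw [gq_Ah ha hb, gq_Ah ha (show (p1:ℕ) < (p2:ℕ)+1 by omega)]
      exact gD4 ha hb
    · exact map_one _
  · simp only [relOf]
    split_ifs with h
    · obtain ⟨ha, hb, hc⟩ := h
      simp only [grel, map_mul, map_inv, mul_inv_eq_one, gq_Xh]
      rw [gq_Ah ha hb]
      exact gD5 ha hb hc
    · exact map_one _
  · simp only [relOf]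
    split_ifs with h
    · obtain ⟨ha, hb, hc⟩ := h
      simp only [grel, map_mul, map_inv, mul_inv_eq_one, gq_Xh]
      rw [gq_Bh ha hb, gq_Bh (show 1 ≤ (p1:ℕ)+1 by omega) (show (p1:ℕ)+1 < (p2:ℕ)+1 by omega)]
      exact gD6 ha hb hc rfl rfl
    · exact map_one _
  · simp only [relOf]
    split_ifs with h
    · obtain ⟨ha, hb⟩ := h
      simp only [grel, map_mul, map_inv, mul_inv_eq_one, gq_Xh]
      rw [gq_Bh ha hb, gq_Bh (show 1 ≤ (p1:ℕ)+1 by omega) (show (p1:ℕ)+1 < (p2:ℕ)+1 by omega),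
        gq_Bh ha (show (p1:ℕ) < (p2:ℕ)+1 by omega)]
      exact gD7 ha hb
    · exact map_one _
  · simp only [relOf]
    split_ifs with h
    · obtain ⟨ha, hb, hc, hd⟩ := h
      simp only [grel, map_mul, map_inv, mul_inv_eq_one, gq_Xh]
      rw [gq_Bh ha hb, gq_Bh ha (show (p1:ℕ) < (p2:ℕ)+1 by omega)]
      exact gD8 ha hb hc hd rfl
    · exact map_one _
  · simp only [relOf]
    split_ifs with h
    · obtain ⟨ha, hb, hc⟩ := h
      simp only [grel, map_mul, map_inv, mul_inv_eq_one, gq_Xh]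
      rw [gq_Bh ha hb]
      exact gD9 ha hb hc
    · exact map_one _

/-- The homomorphism `H →* GBF`. -/
def Phi : H →* GBF := PresentedGroup.toGroup phi_rels

end BFF

namespace BFF
open GBF

lemma Phi_mk (w : FreeGroup V) : Phi (hmk w) = FreeGroup.lift fq w := rfl
lemma Psi_mk (w : FreeGroup BFGen) : Psi (gmk' w) = FreeGroup.lift fp w := rfl

lemma psi_phi : ∀ v : V, Psi (Phi (PresentedGroup.of v)) = PresentedGroup.of v := by
  intro v
  rw [show Phi (PresentedGroup.of v) = fq v from PresentedGroup.toGroup.of phi_rels]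
  fin_cases v <;> exact PresentedGroup.toGroup.of psi_rels

lemma phi_psi : ∀ g : BFGen, Phi (Psi (PresentedGroup.of g)) = PresentedGroup.of g := by
  intro g
  match g with
  | .x n =>
    have e1 : Psi (PresentedGroup.of (BFGen.x n)) = hmk (Xh n) :=
      PresentedGroup.toGroup.of psi_rels
    rw [e1, Phi_mk, gq_Xh]
    rfl
  | .b p q =>
    have e1 : Psi (PresentedGroup.of (BFGen.b p q)) = hmk (Bph p q) :=
      PresentedGroup.toGroup.of psi_rels
    rw [e1, Phi_mk, gq_Bph p q]
    show GBF.bg (p+1) (p+q+2) = _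
    unfold GBF.bg
    rw [show (p+1)-1 = p by omega, show (p+q+2)-(p+1)-1 = q by omega]
  | .a p q =>
    have e1 : Psi (PresentedGroup.of (BFGen.a p q)) = hmk (Aph p q) :=
      PresentedGroup.toGroup.of psi_rels
    rw [e1, Phi_mk, show Aph p q = (Bph p (q+1))⁻¹ * Bph p q from rfl, map_mul, map_inv,
      gq_Bph p (q+1), gq_Bph p q,
      bg_congr (i := p+1) (i' := p+1) (j := p+(q+1)+2) (j' := (p+q+2)+1) rfl (by omega),
      gC (i := p+1) (j := p+q+2) (by omega) (by omega)]
    have e2 : ag (p+1) (p+q+2) = PresentedGroup.of (BFGen.a p q) := by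
      unfold GBF.ag
      rw [show (p+1)-1 = p by omega, show (p+q+2)-(p+1)-1 = q by omega]
    rw [← e2]
    group

/-- The isomorphism. -/
noncomputable def iso : H ≃* GBF :=
  MonoidHom.toMulEquiv Phi Psi
    (PresentedGroup.ext (fun v => psi_phi v))
    (PresentedGroup.ext (fun g => phi_psi g))

end BFF

/-- The group `BF` is finitely presented. -/
theorem bf_finitely_presented :
    ∃ (m k : ℕ) (rels : Fin k → FreeGroup (Fin m)),
      Nonempty (PresentedGroup (Set.range rels) ≃* GBF) := by
  classical
  have e : BFF.idx ≃ Fin (Fintype.card BFF.idx) := Fintype.equivFin _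
  refine ⟨6, Fintype.card BFF.idx, BFF.F ∘ e.symm, ⟨?_⟩⟩
  have hrange : Set.range (BFF.F ∘ e.symm) = BFF.S := by
    rw [Set.range_comp, Equiv.range_eq_univ, Set.image_univ]
    rfl
  rw [hrange]
  exact BFF.iso
end

section
/- The assignment x_i ↦ x_i extends to a well-defined group homomorphism G_F → G_BF, and this homomorphism is injective; that is, the generators x_i generate a copy of Thompson's group F inside G_BF. -/
/-- The defining relations of Thompson's group `F`:
`x_j x_i = x_i x_{j+1}` for `j > i`. -/
def fRels : Set (FreeGroup ℕ) :=
  { g | ∃ i j : ℕ, i < j ∧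
      g = grel (FreeGroup.of j * FreeGroup.of i) (FreeGroup.of i * FreeGroup.of (j + 1)) }

/-- Thompson's group `F`, via its infinite presentation. -/
abbrev GF : Type := PresentedGroup fRels

/-!
Killing every `α_{ij}` and `β_{ij}` turns each defining relation of `BF` into either a relation
of `F` or a triviality, so `x_i ↦ x_i`, `α_{ij}, β_{ij} ↦ 1` defines a retraction `BF → F`.
It is a left inverse of `x_i ↦ x_i : F → BF`, which is therefore injective.
-/

theorem map_grel_eq_one_iff {α G : Type*} [Group G] (φ : FreeGroup α →* G)
    (u v : FreeGroup α) : φ (grel u v) = 1 ↔ φ u = φ v := by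
  rw [grel, map_mul, map_inv, mul_inv_eq_one]

theorem GF.of_mul_of {i j : ℕ} (hij : i < j) :
    (PresentedGroup.of j * PresentedGroup.of i : GF) =
      PresentedGroup.of i * PresentedGroup.of (j + 1) :=
  PresentedGroup.mk_eq_mk_of_mul_inv_mem ⟨i, j, hij, rfl⟩

theorem GBF.xg_mul_xg {i j : ℕ} (hij : i < j) :
    GBF.xg j * GBF.xg i = GBF.xg i * GBF.xg (j + 1) :=
  PresentedGroup.mk_eq_mk_of_mul_inv_mem (Or.inl ⟨i, j, hij, rfl⟩)

def fToBF : GF →* GBF :=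
  PresentedGroup.toGroup (f := GBF.xg) <| by
    rintro _ ⟨i, j, hij, rfl⟩
    simpa [map_grel_eq_one_iff] using GBF.xg_mul_xg hij

theorem fToBF_of (i : ℕ) : fToBF (PresentedGroup.of i) = GBF.xg i :=
  PresentedGroup.toGroup.of _

def BFGen.killBraids : BFGen → GF
  | x i => PresentedGroup.of i
  | a _ _ => 1
  | b _ _ => 1

def bfToF : GBF →* GF :=
  PresentedGroup.toGroup (f := BFGen.killBraids) <| by
    intro r hr
    rcases hr with ⟨i, j, hij, rfl⟩ | hr
    · simpa [map_grel_eq_one_iff, BFGen.X, BFGen.killBraids] using GF.of_mul_of hij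
    · casesm* _ ∨ _, ∃ _, _, _ ∧ _ <;> subst_vars <;>
        simp [grel, BFGen.X, BFGen.A, BFGen.B, BFGen.killBraids]

theorem bfToF_xg (i : ℕ) : bfToF (GBF.xg i) = PresentedGroup.of i :=
  PresentedGroup.toGroup.of _

theorem bfToF_comp_fToBF : bfToF.comp fToBF = MonoidHom.id GF :=
  PresentedGroup.ext fun i => by simp [fToBF_of, bfToF_xg]

/-- The assignment `x_i ↦ x_i` extends to a well-defined group homomorphism
`F → BF`, and this homomorphism is injective. -/
theorem f_to_bf_injective :
    ∃ φ : GF →* GBF,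
      (∀ i : ℕ, φ (PresentedGroup.of i) = GBF.xg i) ∧ Function.Injective φ :=
  ⟨fToBF, fToBF_of,
    Function.LeftInverse.injective (g := bfToF) (DFunLike.congr_fun bfToF_comp_fToBF)⟩
end
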